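/- arXiv:2004.08983 — 6 statements merged into one kernel-verified Lean document; each statement's English description precedes it below -/
import Mathlib

section
/- Let 0 ≤ h < H, let Ω ⊂ ℝⁿ be a bounded domain, and let M satisfy h|Ω| ≤ M ≤ H|Ω| and M > 0. Suppose ρ : Ω → [h,H] is measurable with ∫_Ω ρ = M, and u ∈ H^s_0(Ω) satisfies ∫_Ω ρ u² > 0 and E_s(u) = Θ(h,H,M) · ∫_Ω ρ u², where Θ(h,H,M) is the double infimum of E_s(w)/∫_Ω ρ' w² over all admissible densities ρ' : Ω → [h,H] with ∫_Ω ρ' = M and all w ∈ H^s_0(Ω) with ∫_Ω ρ' w² > 0. Then u does not change sign: either u ≥ 0 almost everywhere in ℝⁿ or u ≤ 0 almost everywhere in ℝⁿ. -/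
open MeasureTheory
open scoped ENNReal

noncomputable section

/-- The Gagliardo double integral `∫∫ (u x − u y)² / ‖x−y‖^{n+2s}` (valued in `ℝ≥0∞`). -/
def gagliardo (n : ℕ) (s : ℝ) (u : EuclideanSpace ℝ (Fin n) → ℝ) : ℝ≥0∞ :=
  ∫⁻ x, ∫⁻ y, ENNReal.ofReal ((u x - u y) ^ 2 / ‖x - y‖ ^ ((n : ℝ) + 2 * s))

/-- The fractional energy `E_s(u) = (c/2) ∫∫ (u x − u y)² / ‖x−y‖^{n+2s}`,
where `c = c_{n,s} > 0` is the normalizing constant of the fractional Laplacian. -/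
def fracEnergy (n : ℕ) (s c : ℝ) (u : EuclideanSpace ℝ (Fin n) → ℝ) : ℝ :=
  (c / 2) * (gagliardo n s u).toReal

/-- Membership in `H^s_0(Ω)`: measurable, square integrable, finite Gagliardo seminorm,
and vanishing a.e. outside `Ω`. -/
def memHs0 (n : ℕ) (s : ℝ) (Ω : Set (EuclideanSpace ℝ (Fin n)))
    (u : EuclideanSpace ℝ (Fin n) → ℝ) : Prop :=
  Measurable u ∧ Integrable (fun x => (u x) ^ 2) ∧ gagliardo n s u < ⊤ ∧
    ∀ᵐ x, x ∉ Ω → u x = 0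

/-- The first eigenvalue `λ_Ω(α, D)` of `(−Δ)^s + α χ_D` with Dirichlet condition outside `Ω`. -/
def lamEV (n : ℕ) (s c α : ℝ) (Ω D : Set (EuclideanSpace ℝ (Fin n))) : ℝ :=
  sInf { v | ∃ u, memHs0 n s Ω u ∧ (∫ x, (u x) ^ 2) = 1 ∧
    v = fracEnergy n s c u + α * ∫ x in D, (u x) ^ 2 }

/-- The optimal eigenvalue `Λ_Ω(α, A) = inf { λ_Ω(α, D) : D ⊆ Ω measurable, |D| = A }`. -/
def LamEV (n : ℕ) (s c α A : ℝ) (Ω : Set (EuclideanSpace ℝ (Fin n))) : ℝ :=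
  sInf { v | ∃ D, D ⊆ Ω ∧ MeasurableSet D ∧ volume D = ENNReal.ofReal A ∧
    v = lamEV n s c α Ω D }

/-- `(u, D)` is an optimal pair for the data `(Ω, α, A)`. -/
def optimalPair (n : ℕ) (s c α A : ℝ) (Ω D : Set (EuclideanSpace ℝ (Fin n)))
    (u : EuclideanSpace ℝ (Fin n) → ℝ) : Prop :=
  D ⊆ Ω ∧ MeasurableSet D ∧ volume D = ENNReal.ofReal A ∧
  memHs0 n s Ω u ∧ (∫ x, (u x) ^ 2) = 1 ∧
  fracEnergy n s c u + α * ∫ x in D, (u x) ^ 2 = LamEV n s c α A Ω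


/-- `Θ(h,H,M)`: double infimum of the Rayleigh quotient `E_s(w)/∫_Ω ρ' w²` over admissible
densities `ρ' : Ω → [h,H]` with `∫_Ω ρ' = M` and `w ∈ H^s_0(Ω)` with `∫_Ω ρ' w² > 0`. -/
def Theta (n : ℕ) (s c : ℝ) (Ω : Set (EuclideanSpace ℝ (Fin n))) (h H M : ℝ) : ℝ :=
  sInf { v | ∃ ρ w, Measurable ρ ∧ (∀ x ∈ Ω, ρ x ∈ Set.Icc h H) ∧
    (∫ x in Ω, ρ x) = M ∧ memHs0 n s Ω w ∧
    (0 < ∫ x in Ω, ρ x * (w x) ^ 2) ∧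
    v = fracEnergy n s c w / ∫ x in Ω, ρ x * (w x) ^ 2 }

/-!
Replacing a minimizer `u` by `|u|` keeps it admissible with the same weighted mass
`∫_Ω ρ u²`, and pointwise `(|u x| - |u y|)² ≤ (u x - u y)²`. Minimality of `u` then forces equality
of the two Gagliardo integrals, hence of their integrands almost everywhere on `ℝⁿ × ℝⁿ`. Off the
diagonal that equality says `u x * u y ≥ 0`, so `{u > 0} × {u < 0}` is null and one of the two
factors is null.
-/

theorem ae_nonneg_or_ae_nonpos_of_ae_mul_nonneg {α : Type*} [MeasurableSpace α] {μ : Measure α}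
    [SFinite μ] {f : α → ℝ} (hf : ∀ᵐ p ∂μ.prod μ, 0 ≤ f p.1 * f p.2) :
    (∀ᵐ x ∂μ, 0 ≤ f x) ∨ (∀ᵐ x ∂μ, f x ≤ 0) := by
  have hnull : μ {x | f x < 0} * μ {x | 0 < f x} = 0 := by
    rw [← Measure.prod_prod]
    refine measure_mono_null ?_ (ae_iff.mp hf)
    rintro ⟨x, y⟩ ⟨hx, hy⟩
    exact not_le.mpr (mul_neg_of_neg_of_pos hx hy)
  rcases mul_eq_zero.mp hnull with hneg | hpos
  · exact .inl (by simpa using measure_eq_zero_iff_ae_notMem.mp hneg)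
  · exact .inr (by simpa using measure_eq_zero_iff_ae_notMem.mp hpos)

theorem mul_nonneg_of_sq_abs_sub_abs_eq {a b : ℝ} (h : (|a| - |b|) ^ 2 = (a - b) ^ 2) :
    0 ≤ a * b := by
  have hab : |a * b| = a * b := by
    rw [abs_mul]
    nlinarith [sq_abs a, sq_abs b]
  exact hab ▸ abs_nonneg _

section Gagliardo

variable {n : ℕ} {s : ℝ}

def gagliardoKernel (n : ℕ) (s : ℝ) (u : EuclideanSpace ℝ (Fin n) → ℝ)
    (p : EuclideanSpace ℝ (Fin n) × EuclideanSpace ℝ (Fin n)) : ℝ≥0∞ :=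
  ENNReal.ofReal ((u p.1 - u p.2) ^ 2 / ‖p.1 - p.2‖ ^ ((n : ℝ) + 2 * s))

theorem measurable_gagliardoKernel {u : EuclideanSpace ℝ (Fin n) → ℝ} (hu : Measurable u) :
    Measurable (gagliardoKernel n s u) := by
  unfold gagliardoKernel
  fun_prop

theorem gagliardo_eq_lintegral_prod {u : EuclideanSpace ℝ (Fin n) → ℝ} (hu : Measurable u) :
    gagliardo n s u = ∫⁻ p, gagliardoKernel n s u p ∂volume.prod volume :=
  (lintegral_prod _ (measurable_gagliardoKernel hu).aemeasurable).symm

theorem gagliardoKernel_abs_le (u : EuclideanSpace ℝ (Fin n) → ℝ) :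
    gagliardoKernel n s (|u ·|) ≤ gagliardoKernel n s u := fun p => by
  refine ENNReal.ofReal_le_ofReal (div_le_div_of_nonneg_right ?_ (by positivity))
  exact sq_le_sq.mpr (by simpa using abs_abs_sub_abs_le_abs_sub (u p.1) (u p.2))

theorem gagliardo_abs_le (u : EuclideanSpace ℝ (Fin n) → ℝ) :
    gagliardo n s (|u ·|) ≤ gagliardo n s u :=
  lintegral_mono fun x => lintegral_mono fun y => gagliardoKernel_abs_le u (x, y)

theorem mul_nonneg_of_gagliardoKernel_abs_eq {u : EuclideanSpace ℝ (Fin n) → ℝ}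
    {p : EuclideanSpace ℝ (Fin n) × EuclideanSpace ℝ (Fin n)}
    (h : gagliardoKernel n s (|u ·|) p = gagliardoKernel n s u p) : 0 ≤ u p.1 * u p.2 := by
  obtain ⟨x, y⟩ := p
  rcases eq_or_ne x y with rfl | hxy
  · exact mul_self_nonneg _
  have hd : 0 < ‖x - y‖ ^ ((n : ℝ) + 2 * s) :=
    Real.rpow_pos_of_pos (norm_pos_iff.mpr (sub_ne_zero.mpr hxy)) _
  unfold gagliardoKernel at h
  rw [ENNReal.ofReal_eq_ofReal_iff (by positivity) (by positivity), div_left_inj' hd.ne'] at h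
  exact mul_nonneg_of_sq_abs_sub_abs_eq h

theorem ae_mul_nonneg_of_gagliardo_abs_eq {u : EuclideanSpace ℝ (Fin n) → ℝ}
    (hu : Measurable u) (hfin : gagliardo n s u < ⊤)
    (heq : gagliardo n s (|u ·|) = gagliardo n s u) :
    ∀ᵐ p ∂volume.prod volume, 0 ≤ u p.1 * u p.2 := by
  rw [gagliardo_eq_lintegral_prod hu, gagliardo_eq_lintegral_prod hu.abs] at heq
  have hkernel : gagliardoKernel n s (|u ·|) =ᵐ[volume.prod volume] gagliardoKernel n s u :=
    ae_eq_of_ae_le_of_lintegral_le (.of_forall (gagliardoKernel_abs_le u))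
      (heq ▸ (gagliardo_eq_lintegral_prod hu ▸ hfin).ne)
      (measurable_gagliardoKernel hu).aemeasurable heq.ge
  filter_upwards [hkernel] with p hp
  exact mul_nonneg_of_gagliardoKernel_abs_eq hp

theorem memHs0.abs {Ω : Set (EuclideanSpace ℝ (Fin n))} {u : EuclideanSpace ℝ (Fin n) → ℝ}
    (hu : memHs0 n s Ω u) : memHs0 n s Ω (|u ·|) := by
  obtain ⟨hmeas, hsq, hfin, hzero⟩ := hu
  refine ⟨hmeas.abs, by simpa only [sq_abs] using hsq, (gagliardo_abs_le u).trans_lt hfin, ?_⟩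
  filter_upwards [hzero] with x hx hxΩ
  simp [hx hxΩ]

theorem gagliardo_le_of_fracEnergy_le {c : ℝ} (hc : 0 < c) {u v : EuclideanSpace ℝ (Fin n) → ℝ}
    (hu : gagliardo n s u < ⊤) (hv : gagliardo n s v < ⊤)
    (h : fracEnergy n s c u ≤ fracEnergy n s c v) : gagliardo n s u ≤ gagliardo n s v :=
  (ENNReal.toReal_le_toReal hu.ne hv.ne).mp (le_of_mul_le_mul_left h (by positivity))

end Gagliardo

section Theta

variable {n : ℕ} {s c : ℝ} {Ω : Set (EuclideanSpace ℝ (Fin n))} {h H M : ℝ}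
  {ρ : EuclideanSpace ℝ (Fin n) → ℝ}

theorem Theta_le_fracEnergy_div (hc : 0 ≤ c) (hρmeas : Measurable ρ)
    (hρrange : ∀ x ∈ Ω, ρ x ∈ Set.Icc h H) (hρint : (∫ x in Ω, ρ x) = M)
    {w : EuclideanSpace ℝ (Fin n) → ℝ} (hw : memHs0 n s Ω w)
    (hpos : 0 < ∫ x in Ω, ρ x * (w x) ^ 2) :
    Theta n s c Ω h H M ≤ fracEnergy n s c w / ∫ x in Ω, ρ x * (w x) ^ 2 := by
  refine csInf_le ⟨0, ?_⟩ ⟨ρ, w, hρmeas, hρrange, hρint, hw, hpos, rfl⟩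
  rintro t ⟨_, _, -, -, -, -, hpos', rfl⟩
  exact div_nonneg (mul_nonneg (by positivity) ENNReal.toReal_nonneg) hpos'.le

theorem fracEnergy_le_of_eq_Theta_mul (hc : 0 ≤ c) (hρmeas : Measurable ρ)
    (hρrange : ∀ x ∈ Ω, ρ x ∈ Set.Icc h H) (hρint : (∫ x in Ω, ρ x) = M)
    {u w : EuclideanSpace ℝ (Fin n) → ℝ} (hpos : 0 < ∫ x in Ω, ρ x * (u x) ^ 2)
    (hmin : fracEnergy n s c u = Theta n s c Ω h H M * ∫ x in Ω, ρ x * (u x) ^ 2)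
    (hw : memHs0 n s Ω w) (hmass : (∫ x in Ω, ρ x * (w x) ^ 2) = ∫ x in Ω, ρ x * (u x) ^ 2) :
    fracEnergy n s c u ≤ fracEnergy n s c w := by
  have hΘ := Theta_le_fracEnergy_div hc hρmeas hρrange hρint hw (hmass ▸ hpos)
  rwa [hmass, le_div_iff₀ hpos, ← hmin] at hΘ

end Theta

theorem minimizer_has_sign_general {n : ℕ} (s c : ℝ) (hc : 0 < c)
    (Ω : Set (EuclideanSpace ℝ (Fin n)))
    (h H M : ℝ)
    (ρ : EuclideanSpace ℝ (Fin n) → ℝ) (hρmeas : Measurable ρ)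
    (hρrange : ∀ x ∈ Ω, ρ x ∈ Set.Icc h H) (hρint : (∫ x in Ω, ρ x) = M)
    (u : EuclideanSpace ℝ (Fin n) → ℝ) (hu : memHs0 n s Ω u)
    (hupos : 0 < ∫ x in Ω, ρ x * (u x) ^ 2)
    (hmin : fracEnergy n s c u = Theta n s c Ω h H M * ∫ x in Ω, ρ x * (u x) ^ 2) :
    (∀ᵐ x, 0 ≤ u x) ∨ (∀ᵐ x, u x ≤ 0) := by
  have habs : memHs0 n s Ω (|u ·|) := hu.abs
  have hE : fracEnergy n s c u ≤ fracEnergy n s c (|u ·|) :=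
    fracEnergy_le_of_eq_Theta_mul hc.le hρmeas hρrange hρint hupos hmin habs
      (by simp only [sq_abs])
  have heq : gagliardo n s (|u ·|) = gagliardo n s u :=
    (gagliardo_abs_le u).antisymm (gagliardo_le_of_fracEnergy_le hc hu.2.2.1 habs.2.2.1 hE)
  exact ae_nonneg_or_ae_nonpos_of_ae_mul_nonneg
    (ae_mul_nonneg_of_gagliardo_abs_eq hu.1 hu.2.2.1 heq)

/-- a minimizer `u` of the composite-membrane Rayleigh quotient does not change
sign: either `u ≥ 0` a.e. on `ℝⁿ` or `u ≤ 0` a.e. on `ℝⁿ`. -/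
theorem minimizer_has_sign {n : ℕ} (s c : ℝ) (hs0 : 0 < s) (hs1 : s < 1) (hc : 0 < c)
    (Ω : Set (EuclideanSpace ℝ (Fin n))) (hΩopen : IsOpen Ω) (hΩconn : IsConnected Ω)
    (hΩbdd : Bornology.IsBounded Ω)
    (h H M : ℝ) (hh : 0 ≤ h) (hhH : h < H) (hM0 : 0 < M)
    (hM1 : h * (volume Ω).toReal ≤ M) (hM2 : M ≤ H * (volume Ω).toReal)
    (ρ : EuclideanSpace ℝ (Fin n) → ℝ) (hρmeas : Measurable ρ)
    (hρrange : ∀ x ∈ Ω, ρ x ∈ Set.Icc h H) (hρint : (∫ x in Ω, ρ x) = M)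
    (u : EuclideanSpace ℝ (Fin n) → ℝ) (hu : memHs0 n s Ω u)
    (hupos : 0 < ∫ x in Ω, ρ x * (u x) ^ 2)
    (hmin : fracEnergy n s c u = Theta n s c Ω h H M * ∫ x in Ω, ρ x * (u x) ^ 2) :
    (∀ᵐ x, 0 ≤ u x) ∨ (∀ᵐ x, u x ≤ 0) :=
  minimizer_has_sign_general s c hc Ω h H M ρ hρmeas hρrange hρint u hu hupos hmin
end
end

section
/- Let Ω ⊂ ℝⁿ be a bounded measurable set, 0 ≤ h < H, and M with h|Ω| ≤ M < H|Ω|. Set A := (H|Ω| − M)/(H − h) ∈ (0,|Ω|]. Let u : Ω → ℝ be measurable with u ≥ 0 a.e., let ρ : Ω → [h,H] be measurable with ∫_Ω ρ = M, set t := sup{ c ∈ ℝ : |{x ∈ Ω : u(x) < c}| < A } and assume t < ∞. Let D ⊆ Ω be measurable with |D| = A and (up to null sets) {x ∈ Ω : u(x) < t} ⊆ D ⊆ {x ∈ Ω : u(x) ≤ t}, and define ρ_D := h·χ_D + H·χ_{Ω∖D}. Then ∫_Ω ρ_D u² dx ≥ ∫_Ω ρ u² dx. -/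
open MeasureTheory
open scoped ENNReal Classical

/-! Put `s = (max t 0)²`; since `u ≥ 0`, `u² ≤ s` a.e. on `D` and `u² ≥ s` a.e. on `Ω \ D`.
Passing from `ρ` to `ρ_D` removes the mass `∫_D (ρ - h)` from `D` and adds `∫_{Ω∖D} (H - ρ)` on
`Ω \ D`, and `|D| = A` says exactly that these two masses agree. So the loss on `D` is at most
`s` times the common mass, and the gain on `Ω \ D` is at least that. -/

section Exchange

variable {α : Type*} [MeasurableSpace α] {μ : Measure α} {Ω D : Set α} {ρ w : α → ℝ}
  {h H s : ℝ}

theorem integrableOn_of_forall_mem_Icc (hΩ : MeasurableSet Ω) (hΩfin : μ Ω ≠ ∞)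
    (hρ : Measurable ρ) (hρ_mem : ∀ x ∈ Ω, ρ x ∈ Set.Icc h H) : IntegrableOn ρ Ω μ := by
  refine Measure.integrableOn_of_bounded hΩfin hρ.aestronglyMeasurable (M := max |h| |H|) ?_
  filter_upwards [ae_restrict_mem hΩ] with x hx
  exact abs_le_max_abs_abs (hρ_mem x hx).1 (hρ_mem x hx).2

theorem setLIntegral_excess_eq_setLIntegral_deficit (hΩ : MeasurableSet Ω) (hΩfin : μ Ω ≠ ∞)
    (hD : MeasurableSet D) (hDΩ : D ⊆ Ω) (hρ : Measurable ρ)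
    (hρ_mem : ∀ x ∈ Ω, ρ x ∈ Set.Icc h H)
    (hmass : ∫ x in Ω, ρ x ∂μ = h * μ.real D + H * μ.real (Ω \ D)) :
    ∫⁻ x in D, ENNReal.ofReal (ρ x - h) ∂μ = ∫⁻ x in Ω \ D, ENNReal.ofReal (H - ρ x) ∂μ := by
  have hρΩ := integrableOn_of_forall_mem_Icc hΩ hΩfin hρ hρ_mem
  have hρD : IntegrableOn ρ D μ := hρΩ.mono_set hDΩ
  have hρC : IntegrableOn ρ (Ω \ D) μ := hρΩ.mono_set Set.sdiff_subset
  have hDfin : μ D ≠ ∞ := ne_top_of_le_ne_top hΩfin (measure_mono hDΩ)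
  have hCfin : μ (Ω \ D) ≠ ∞ := ne_top_of_le_ne_top hΩfin (measure_mono Set.sdiff_subset)
  have hsplit : ∫ x in D, ρ x ∂μ + ∫ x in Ω \ D, ρ x ∂μ = ∫ x in Ω, ρ x ∂μ := by
    rw [← integral_inter_add_sdiff hD hρΩ, Set.inter_eq_right.2 hDΩ]
  have hhD : IntegrableOn (fun _ => h) D μ := integrableOn_const hDfin
  have hHC : IntegrableOn (fun _ => H) (Ω \ D) μ := integrableOn_const hCfin
  have hexcess : IntegrableOn (fun x => ρ x - h) D μ := hρD.sub hhD
  have hdeficit : IntegrableOn (fun x => H - ρ x) (Ω \ D) μ := hHC.sub hρC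
  rw [← ofReal_integral_eq_lintegral_ofReal hexcess,
    ← ofReal_integral_eq_lintegral_ofReal hdeficit, integral_sub hρD hhD, integral_sub hHC hρC,
    setIntegral_const, setIntegral_const, smul_eq_mul, smul_eq_mul]
  · congr 1
    linarith
  · filter_upwards [ae_restrict_mem (hΩ.diff hD)] with x hx
    exact sub_nonneg.2 (hρ_mem x hx.1).2
  · filter_upwards [ae_restrict_mem hD] with x hx
    exact sub_nonneg.2 (hρ_mem x (hDΩ hx)).1

theorem setLIntegral_ofReal_mul_le_two_valued (hΩ : MeasurableSet Ω) (hD : MeasurableSet D)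
    (hDΩ : D ⊆ Ω) (hρ : Measurable ρ) (hh : 0 ≤ h) (hρ_mem : ∀ x ∈ Ω, ρ x ∈ Set.Icc h H)
    (hw : ∀ x, 0 ≤ w x) (hs : 0 ≤ s)
    (hwD : ∀ᵐ x ∂μ, x ∈ D → w x ≤ s) (hwC : ∀ᵐ x ∂μ, x ∈ Ω \ D → s ≤ w x)
    (hmass : ∫⁻ x in D, ENNReal.ofReal (ρ x - h) ∂μ
      = ∫⁻ x in Ω \ D, ENNReal.ofReal (H - ρ x) ∂μ) :
    ∫⁻ x in Ω, ENNReal.ofReal (ρ x * w x) ∂μ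
      ≤ ∫⁻ x in Ω, ENNReal.ofReal ((if x ∈ D then h else H) * w x) ∂μ := by
  have hsplit (f : α → ℝ≥0∞) :
      ∫⁻ x in Ω, f x ∂μ = ∫⁻ x in D, f x ∂μ + ∫⁻ x in Ω \ D, f x ∂μ := by
    rw [← lintegral_inter_add_sdiff f Ω hD, Set.inter_eq_right.2 hDΩ]
  have hon_D : ∫⁻ x in D, ENNReal.ofReal (ρ x * w x) ∂μ
      ≤ ∫⁻ x in D, ENNReal.ofReal (h * w x) ∂μ
        + ENNReal.ofReal s * ∫⁻ x in D, ENNReal.ofReal (ρ x - h) ∂μ := by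
    rw [← lintegral_const_mul' _ _ ENNReal.ofReal_ne_top,
      ← lintegral_add_right _ ((hρ.sub_const h).ennreal_ofReal.const_mul _)]
    refine lintegral_mono_ae ?_
    filter_upwards [ae_restrict_mem hD, ae_restrict_of_ae hwD] with x hx hwx
    have hρx := (hρ_mem x (hDΩ hx)).1
    rw [← ENNReal.ofReal_mul hs]
    refine (ENNReal.ofReal_le_ofReal ?_).trans ENNReal.ofReal_add_le
    nlinarith [hwx hx]
  have hon_C : ENNReal.ofReal s * ∫⁻ x in Ω \ D, ENNReal.ofReal (H - ρ x) ∂μ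
        + ∫⁻ x in Ω \ D, ENNReal.ofReal (ρ x * w x) ∂μ
      ≤ ∫⁻ x in Ω \ D, ENNReal.ofReal (H * w x) ∂μ := by
    rw [← lintegral_const_mul' _ _ ENNReal.ofReal_ne_top]
    refine (le_lintegral_add _ _).trans (lintegral_mono_ae ?_)
    filter_upwards [ae_restrict_mem (hΩ.diff hD), ae_restrict_of_ae hwC] with x hx hwx
    have hρx := hρ_mem x hx.1
    rw [← ENNReal.ofReal_mul hs, ← ENNReal.ofReal_add (mul_nonneg hs (by linarith [hρx.2]))
      (mul_nonneg (by linarith [hρx.1]) (hw x))]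
    exact ENNReal.ofReal_le_ofReal (by nlinarith [hwx hx, hρx.2])
  have hD_eq : ∫⁻ x in D, ENNReal.ofReal ((if x ∈ D then h else H) * w x) ∂μ
      = ∫⁻ x in D, ENNReal.ofReal (h * w x) ∂μ :=
    setLIntegral_congr_fun hD fun x hx => by simp [hx]
  have hC_eq : ∫⁻ x in Ω \ D, ENNReal.ofReal ((if x ∈ D then h else H) * w x) ∂μ
      = ∫⁻ x in Ω \ D, ENNReal.ofReal (H * w x) ∂μ :=
    setLIntegral_congr_fun (hΩ.diff hD) fun x hx => by simp [hx.2]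
  calc ∫⁻ x in Ω, ENNReal.ofReal (ρ x * w x) ∂μ
      ≤ ∫⁻ x in D, ENNReal.ofReal (h * w x) ∂μ
          + (ENNReal.ofReal s * ∫⁻ x in Ω \ D, ENNReal.ofReal (H - ρ x) ∂μ
            + ∫⁻ x in Ω \ D, ENNReal.ofReal (ρ x * w x) ∂μ) := by
        rw [hsplit, ← hmass, ← add_assoc]
        gcongr
    _ ≤ _ := by
        rw [hsplit, hD_eq, hC_eq]
        gcongr

end Exchange

theorem density_representation_general {n : ℕ}
    (Ω : Set (EuclideanSpace ℝ (Fin n))) (hΩmeas : MeasurableSet Ω)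
    (hΩbdd : Bornology.IsBounded Ω)
    (h H M : ℝ) (hh : 0 ≤ h) (hhH : h < H)
    (hM2 : M < H * (volume Ω).toReal)
    (A : ℝ) (hA : A = (H * (volume Ω).toReal - M) / (H - h))
    (u : EuclideanSpace ℝ (Fin n) → ℝ)
    (hunonneg : ∀ᵐ x, x ∈ Ω → 0 ≤ u x)
    (ρ : EuclideanSpace ℝ (Fin n) → ℝ) (hρmeas : Measurable ρ)
    (hρrange : ∀ x ∈ Ω, ρ x ∈ Set.Icc h H) (hρint : (∫ x in Ω, ρ x) = M)
    (t : ℝ)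
    (D : Set (EuclideanSpace ℝ (Fin n))) (hDsub : D ⊆ Ω) (hDmeas : MeasurableSet D)
    (hDvol : volume D = ENNReal.ofReal A)
    (hD1 : volume ({x ∈ Ω | u x < t} \ D) = 0)
    (hD2 : volume (D \ {x ∈ Ω | u x ≤ t}) = 0) :
    ∫⁻ x in Ω, ENNReal.ofReal (ρ x * (u x) ^ 2)
      ≤ ∫⁻ x in Ω, ENNReal.ofReal ((if x ∈ D then h else H) * (u x) ^ 2) := by
  have hΩfin : volume Ω ≠ ∞ := hΩbdd.measure_lt_top.ne
  have hA_nonneg : 0 ≤ A := hA ▸ div_nonneg (by linarith) (by linarith)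
  have hvolD : volume.real D = A := by
    rw [measureReal_def, hDvol, ENNReal.toReal_ofReal hA_nonneg]
  have hmass : ∫ x in Ω, ρ x = h * volume.real D + H * volume.real (Ω \ D) := by
    have hAmass : A * (H - h) = H * (volume Ω).toReal - M := by
      rw [hA, div_mul_cancel₀ _ (sub_ne_zero.2 hhH.ne')]
    rw [measureReal_sdiff hDsub hDmeas hΩfin, hvolD, hρint, measureReal_def]
    linarith
  refine setLIntegral_ofReal_mul_le_two_valued (w := fun x => u x ^ 2) (s := max t 0 ^ 2)
    hΩmeas hDmeas hDsub hρmeas hh hρrange (fun x => sq_nonneg (u x)) (sq_nonneg _) ?_ ?_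
    (setLIntegral_excess_eq_setLIntegral_deficit hΩmeas hΩfin hDmeas hDsub hρmeas hρrange hmass)
  · filter_upwards [ae_le_set.2 hD2, hunonneg] with x hx hx0 hxD
    have hux := hx hxD
    exact pow_le_pow_left₀ (hx0 hux.1) (le_max_of_le_left hux.2) 2
  · filter_upwards [ae_le_set.2 hD1, hunonneg] with x hx hx0 hxC
    have hut : t ≤ u x := not_lt.1 fun hlt => hxC.2 (hx ⟨hxC.1, hlt⟩)
    exact pow_le_pow_left₀ (le_max_right _ _) (max_le hut (hx0 hxC.1)) 2

/-- replacing an admissible density `ρ : Ω → [h,H]` of total mass `M` by the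
two-valued density `ρ_D = h·χ_D + H·χ_{Ω∖D}` built from a sublevel-type set `D` of `u`
(of measure `A = (H|Ω| − M)/(H − h)`) does not decrease `∫_Ω ρ u²`. -/
theorem density_representation {n : ℕ}
    (Ω : Set (EuclideanSpace ℝ (Fin n))) (hΩmeas : MeasurableSet Ω)
    (hΩbdd : Bornology.IsBounded Ω)
    (h H M : ℝ) (hh : 0 ≤ h) (hhH : h < H)
    (hM1 : h * (volume Ω).toReal ≤ M) (hM2 : M < H * (volume Ω).toReal)
    (A : ℝ) (hA : A = (H * (volume Ω).toReal - M) / (H - h))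
    (u : EuclideanSpace ℝ (Fin n) → ℝ) (humeas : Measurable u)
    (hunonneg : ∀ᵐ x, x ∈ Ω → 0 ≤ u x)
    (ρ : EuclideanSpace ℝ (Fin n) → ℝ) (hρmeas : Measurable ρ)
    (hρrange : ∀ x ∈ Ω, ρ x ∈ Set.Icc h H) (hρint : (∫ x in Ω, ρ x) = M)
    (t : ℝ) (ht : t = sSup {c : ℝ | volume {x ∈ Ω | u x < c} < ENNReal.ofReal A})
    (htfin : BddAbove {c : ℝ | volume {x ∈ Ω | u x < c} < ENNReal.ofReal A})
    (D : Set (EuclideanSpace ℝ (Fin n))) (hDsub : D ⊆ Ω) (hDmeas : MeasurableSet D)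
    (hDvol : volume D = ENNReal.ofReal A)
    (hD1 : volume ({x ∈ Ω | u x < t} \ D) = 0)
    (hD2 : volume (D \ {x ∈ Ω | u x ≤ t}) = 0) :
    ∫⁻ x in Ω, ENNReal.ofReal (ρ x * (u x) ^ 2)
      ≤ ∫⁻ x in Ω, ENNReal.ofReal ((if x ∈ D then h else H) * (u x) ^ 2) :=
  density_representation_general Ω hΩmeas hΩbdd h H M hh hhH hM2 A hA u hunonneg ρ hρmeas hρrange
    hρint t D hDsub hDmeas hDvol hD1 hD2
end

section
/- Let Ω ⊂ ℝⁿ be a bounded domain, 0 ≤ h < H, and M with h|Ω| ≤ M ≤ H|Ω| and M > 0. Define Θ(h,H,M) as the infimum of E_s(u)/∫_Ω ρ u² over all measurable densities ρ : Ω → [h,H] with ∫_Ω ρ = M and all u ∈ H^s_0(Ω) with ∫_Ω ρ u² > 0. Then, with α := (H − h)·Θ(h,H,M) and A := (H|Ω| − M)/(H − h), one has Λ_Ω(α, A) = H·Θ(h,H,M). -/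
open MeasureTheory
open scoped ENNReal

noncomputable section

/-!
For `D ⊆ Ω` with `|D| = A`, the density `ρ = H - (H - h) 𝟙_D` is admissible for `Θ`, and for
normalized `u` one gets `E(u) + α ∫_D u² ≥ Θ ∫_Ω ρ u² + (H - h) Θ ∫_D u² = H Θ`; hence `Λ ≥ H Θ`.

Conversely, let `(ρ, u)` be admissible with `∫ u² = 1`. The weight `f = (H - ρ) / (H - h)` takes
values in `[0, 1]` and `∫_Ω f = A`, so the bathtub principle yields `D ⊆ Ω` with `|D| = A` and
`∫_D u² ≤ ∫_Ω f u²`. Then `λ(α, D) ≤ E(u) + Θ (H - ∫_Ω ρ u²) ≤ H E(u) / ∫_Ω ρ u²`, and taking the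
infimum over `(ρ, u)` gives `Λ ≤ H Θ`. The bathtub set is a sublevel set of `u²` topped up inside a
level set; that Lebesgue measure takes every intermediate value on subsets follows from the
intermediate value theorem for `r ↦ |S ∩ B(0, r)|`.

In dimension `0`, or when `H^s_0(Ω)` has no function with `∫ u² = 1`, both sides are `0`: the
energy vanishes, resp. the infima are taken over empty sets and `sInf ∅ = 0` in `ℝ`.
-/

open Metric Set Filter Topology

theorem sInf_eq_zero_of_forall_mem_eq_zero {S : Set ℝ} (hS : ∀ v ∈ S, v = 0) : sInf S = 0 :=
  le_antisymm (Real.sInf_nonpos fun v hv => (hS v hv).le)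
    (Real.sInf_nonneg fun v hv => (hS v hv).ge)

section Integrals

variable {α : Type*} [MeasurableSpace α] {μ : Measure α}

theorem measureReal_inter_sub_le (u : Set α) {s t : Set α} (hst : s ⊆ t)
    (hs : MeasurableSet s) (ht : μ t ≠ ∞) :
    μ.real (u ∩ t) - μ.real (u ∩ s) ≤ μ.real t - μ.real s := by
  have hcover : u ∩ t ⊆ (u ∩ s) ∪ (t \ s) := fun x hx =>
    (em (x ∈ s)).imp (fun h => ⟨hx.1, h⟩) (fun h => ⟨hx.2, h⟩)
  have hfin : μ ((u ∩ s) ∪ (t \ s)) ≠ ∞ :=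
    measure_ne_top_of_subset (union_subset (inter_subset_right.trans hst) sdiff_subset) ht
  have := (measureReal_mono hcover hfin).trans (measureReal_union_le _ _)
  rw [measureReal_sdiff hst hs ht] at this
  linarith

theorem integrableOn_of_forall_mem_Icc_s3 {Ω : Set α} {f : α → ℝ} {a b : ℝ} (hΩ : MeasurableSet Ω)
    (hΩfin : μ Ω ≠ ∞) (hf : Measurable f) (hab : ∀ x ∈ Ω, f x ∈ Icc a b) : IntegrableOn f Ω μ :=
  Measure.integrableOn_of_bounded hΩfin hf.aestronglyMeasurable (M := max |a| |b|)
    ((ae_restrict_iff' hΩ).2 (ae_of_all _ fun x hx => abs_le_max_abs_abs (hab x hx).1 (hab x hx).2))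

theorem MeasureTheory.IntegrableOn.bdd_mul_of_forall_mem_Icc {Ω : Set α} {φ g : α → ℝ} {a b : ℝ}
    (hg : IntegrableOn g Ω μ) (hΩ : MeasurableSet Ω) (hφ : Measurable φ)
    (hab : ∀ x ∈ Ω, φ x ∈ Icc a b) : IntegrableOn (fun x => φ x * g x) Ω μ :=
  hg.bdd_mul hφ.aestronglyMeasurable (c := max |a| |b|)
    ((ae_restrict_iff' hΩ).2 (ae_of_all _ fun x hx => abs_le_max_abs_abs (hab x hx).1 (hab x hx).2))

theorem measure_inter_setOf_lt_le_of_forall_lt {Ω : Set α} {g : α → ℝ} {a : ℝ≥0∞} {t₀ : ℝ}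
    (h : ∀ t < t₀, μ (Ω ∩ {x | g x < t}) ≤ a) : μ (Ω ∩ {x | g x < t₀}) ≤ a := by
  have hunion : ⋃ t : Iio t₀, Ω ∩ {x | g x < t} = Ω ∩ {x | g x < t₀} := by
    ext x
    simp only [mem_iUnion, mem_inter_iff, mem_ofPred_eq, Subtype.exists, mem_Iio]
    constructor
    · rintro ⟨t, ht, hx, hxt⟩
      exact ⟨hx, hxt.trans ht⟩
    · rintro ⟨hx, hxt⟩
      obtain ⟨t, hxt, ht⟩ := exists_between hxt
      exact ⟨t, ht, hx, hxt⟩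
  rw [← hunion, Monotone.measure_iUnion (s := fun t : Iio t₀ => Ω ∩ {x | g x < t})
    fun _ _ htt' _ hx => ⟨hx.1, show g _ < _ from lt_of_lt_of_le hx.2 htt'⟩]
  exact iSup_le fun t => h t t.2

theorem le_measure_inter_setOf_le_of_forall_gt {Ω : Set α} {g : α → ℝ} {a : ℝ≥0∞} {t₀ : ℝ}
    (hΩ : MeasurableSet Ω) (hΩfin : μ Ω ≠ ∞) (hg : Measurable g)
    (h : ∀ t > t₀, a ≤ μ (Ω ∩ {x | g x < t})) : a ≤ μ (Ω ∩ {x | g x ≤ t₀}) := by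
  have hinter : ⋂ t : Ioi t₀, Ω ∩ {x | g x < t} = Ω ∩ {x | g x ≤ t₀} := by
    ext x
    simp only [mem_iInter, mem_inter_iff, mem_ofPred_eq, Subtype.forall, mem_Ioi]
    constructor
    · intro hx
      exact ⟨(hx _ (lt_add_one _)).1, le_of_forall_gt fun t ht => (hx t ht).2⟩
    · rintro ⟨hx, hxt⟩ t ht
      exact ⟨hx, hxt.trans_lt ht⟩
  rw [← hinter, Monotone.measure_iInter (s := fun t : Ioi t₀ => Ω ∩ {x | g x < t})
    (fun _ _ htt' _ hx => ⟨hx.1, show g _ < _ from lt_of_lt_of_le hx.2 htt'⟩)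
    (fun _ => (hΩ.inter (measurableSet_lt hg measurable_const)).nullMeasurableSet)
    ⟨⟨t₀ + 1, show t₀ < t₀ + 1 from lt_add_one _⟩,
      measure_ne_top_of_subset inter_subset_left hΩfin⟩]
  exact le_iInf fun t => h t t.2

theorem exists_measure_lt_le_measure_le {Ω : Set α} {g : α → ℝ} (hΩ : MeasurableSet Ω)
    (hΩfin : μ Ω ≠ ∞) (hg : Measurable g) (hg0 : ∀ x ∈ Ω, 0 ≤ g x) {a : ℝ≥0∞} (ha : a < μ Ω) :
    ∃ t, μ (Ω ∩ {x | g x < t}) ≤ a ∧ a ≤ μ (Ω ∩ {x | g x ≤ t}) := by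
  have hmono : Monotone fun t : ℝ => Ω ∩ {x | g x < t} := fun t t' htt' =>
    inter_subset_inter_right _ fun x hx => lt_of_lt_of_le hx htt'
  -- Requiring `0 ≤ t` keeps `T` bounded below also when `a = 0`; it costs nothing since `g ≥ 0`.
  set T : Set ℝ := {t | 0 ≤ t ∧ a ≤ μ (Ω ∩ {x | g x < t})}
  have hTne : T.Nonempty := by
    have hunion : ⋃ t : ℝ, Ω ∩ {x | g x < t} = Ω := by
      refine (iUnion_subset fun t => inter_subset_left).antisymm fun x hx => ?_
      exact mem_iUnion.2 ⟨g x + 1, hx, show g x < g x + 1 from lt_add_one _⟩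
    rw [← hunion, hmono.measure_iUnion, lt_iSup_iff] at ha
    obtain ⟨t, ht⟩ := ha
    exact ⟨max t 0, le_max_right _ _, ht.le.trans (measure_mono (hmono (le_max_left _ _)))⟩
  refine ⟨sInf T, measure_inter_setOf_lt_le_of_forall_lt fun t ht => ?_,
    le_measure_inter_setOf_le_of_forall_gt hΩ hΩfin hg fun t ht => ?_⟩
  · rcases lt_or_ge t 0 with ht0 | ht0
    · have hempty : Ω ∩ {x | g x < t} = ∅ :=
        eq_empty_of_forall_notMem fun x hx => not_lt.2 (hg0 x hx.1) (hx.2.trans ht0)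
      simp [hempty]
    · exact (not_le.1 fun h => notMem_of_lt_csInf ht ⟨0, fun _ ht => ht.1⟩ ⟨ht0, h⟩).le
  · obtain ⟨t', ht'T, ht't⟩ := exists_lt_of_csInf_lt hTne ht
    exact ht'T.2.trans (measure_mono (hmono ht't.le))

theorem setIntegral_le_setIntegral_mul_of_sublevel {Ω D : Set α} {f g : α → ℝ} {t : ℝ}
    (hΩ : MeasurableSet Ω) (hΩfin : μ Ω ≠ ∞) (hD : MeasurableSet D) (hDΩ : D ⊆ Ω)
    (hf : Measurable f) (hf01 : ∀ x ∈ Ω, f x ∈ Icc 0 1) (hg : IntegrableOn g Ω μ)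
    (hDμ : μ.real D = ∫ x in Ω, f x ∂μ) (hgD : ∀ x ∈ D, g x ≤ t)
    (hgΩD : ∀ x ∈ Ω \ D, t ≤ g x) :
    ∫ x in D, g x ∂μ ≤ ∫ x in Ω, f x * g x ∂μ := by
  set χ : α → ℝ := D.indicator fun _ => 1
  have hχm : Measurable χ := measurable_const.indicator hD
  have hfi : IntegrableOn f Ω μ := integrableOn_of_forall_mem_Icc_s3 hΩ hΩfin hf hf01
  have hχi : IntegrableOn χ Ω μ := (integrableOn_const hΩfin).indicator hD
  have hχ01 : ∀ x ∈ Ω, χ x ∈ Icc 0 1 := fun x _ => by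
    by_cases hxD : x ∈ D <;> simp [χ, hxD]
  have hχgi := hg.bdd_mul_of_forall_mem_Icc hΩ hχm hχ01
  have hfgi := hg.bdd_mul_of_forall_mem_Icc hΩ hf hf01
  have hkey : ∫ x in Ω, (χ x * g x - f x * g x) ∂μ ≤ ∫ x in Ω, (χ x * t - f x * t) ∂μ := by
    refine setIntegral_mono_on (hχgi.sub hfgi) ((hχi.mul_const t).sub (hfi.mul_const t)) hΩ
      fun x hx => ?_
    obtain ⟨h0, h1⟩ := hf01 x hx
    rw [← sub_mul, ← sub_mul]
    by_cases hxD : x ∈ D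
    · simp only [χ, indicator_of_mem hxD]
      exact mul_le_mul_of_nonneg_left (hgD x hxD) (by linarith)
    · simp only [χ, indicator_of_notMem hxD, zero_sub, neg_mul, neg_le_neg_iff]
      exact mul_le_mul_of_nonneg_left (hgΩD x ⟨hx, hxD⟩) h0
  have hχg : ∫ x in Ω, χ x * g x ∂μ = ∫ x in D, g x ∂μ := by
    have : ∀ x, χ x * g x = D.indicator g x := fun x => by
      by_cases hxD : x ∈ D <;> simp [χ, hxD]
    simp only [this]
    rw [setIntegral_indicator hD, inter_eq_right.2 hDΩ]
  have hχint : ∫ x in Ω, χ x ∂μ = μ.real D := by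
    rw [setIntegral_indicator hD, inter_eq_right.2 hDΩ, setIntegral_const, smul_eq_mul, mul_one]
  rw [integral_sub hχgi hfgi, hχg, integral_sub (hχi.mul_const t) (hfi.mul_const t),
    integral_mul_const, integral_mul_const, hχint, hDμ, sub_self] at hkey
  linarith

theorem setIntegral_eq_setIntegral_mul_of_integral_eq_measureReal {Ω : Set α} {f : α → ℝ}
    (g : α → ℝ) (hΩ : MeasurableSet Ω) (hΩfin : μ Ω ≠ ∞) (hf : Measurable f)
    (hf01 : ∀ x ∈ Ω, f x ∈ Icc 0 1)
    (hfΩ : ∫ x in Ω, f x ∂μ = μ.real Ω) :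
    ∫ x in Ω, g x ∂μ = ∫ x in Ω, f x * g x ∂μ := by
  have hfi : IntegrableOn f Ω μ := integrableOn_of_forall_mem_Icc_s3 hΩ hΩfin hf hf01
  have hzero : ∫ x in Ω, (1 - f x) ∂μ = 0 := by
    rw [integral_sub (integrableOn_const (C := (1 : ℝ)) hΩfin) hfi, hfΩ, setIntegral_const,
      smul_eq_mul, mul_one, sub_self]
  have hae : ∀ᵐ x ∂μ.restrict Ω, 1 - f x = 0 :=
    (integral_eq_zero_iff_of_nonneg_ae ((ae_restrict_iff' hΩ).2 (ae_of_all _ fun x hx =>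
      sub_nonneg.2 (hf01 x hx).2)) ((integrableOn_const (C := (1 : ℝ)) hΩfin).sub hfi)).1 hzero
  refine integral_congr_ae (hae.mono fun x hx => ?_)
  show g x = f x * g x
  rw [show f x = 1 by linarith, one_mul]

theorem integral_sq_pos_of_setIntegral_mul_sq_pos {Ω : Set α} {ρ w : α → ℝ}
    (hw : Integrable (fun x => w x ^ 2) μ) (hJ : 0 < ∫ x in Ω, ρ x * w x ^ 2 ∂μ) :
    0 < ∫ x, w x ^ 2 ∂μ := by
  refine (integral_nonneg fun x => sq_nonneg (w x)).lt_of_ne fun h0 => hJ.ne' ?_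
  have hae := (integral_eq_zero_iff_of_nonneg (fun x => sq_nonneg (w x)) hw).1 h0.symm
  exact integral_eq_zero_of_ae <| (ae_restrict_of_ae hae).mono fun x hx => by
    simp only [Pi.zero_apply] at hx ⊢
    rw [hx, mul_zero]

end Integrals

section AddHaar

variable {E : Type*} [NormedAddCommGroup E] [NormedSpace ℝ E] [MeasurableSpace E] [BorelSpace E]
  [FiniteDimensional ℝ E] [Nontrivial E] (μ : Measure E) [μ.IsAddHaarMeasure]

theorem continuousOn_measureReal_inter_ball (s : Set E) :
    ContinuousOn (fun r => μ.real (s ∩ ball 0 r)) (Ici 0) := by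
  set w : ℝ → ℝ := fun r => r ^ Module.finrank ℝ E * μ.real (ball 0 1)
  have hw : ∀ r : ℝ, 0 ≤ r → μ.real (ball (0 : E) r) = w r := fun r hr => by
    rw [measureReal_def, Measure.addHaar_ball μ 0 hr, ENNReal.toReal_mul,
      ENNReal.toReal_ofReal (by positivity)]
    rfl
  have hle : ∀ r ∈ Ici (0 : ℝ), ∀ r' ∈ Ici (0 : ℝ), r ≤ r' →
      dist (μ.real (s ∩ ball 0 r')) (μ.real (s ∩ ball 0 r)) ≤ dist (w r') (w r) := by
    intro r hr r' _ hrr'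
    have hmono : μ.real (s ∩ ball 0 r) ≤ μ.real (s ∩ ball 0 r') :=
      measureReal_mono (inter_subset_inter_right _ (ball_subset_ball hrr'))
        (measure_ne_top_of_subset inter_subset_right measure_ball_lt_top.ne)
    have hinc := measureReal_inter_sub_le (μ := μ) s (ball_subset_ball (x := 0) hrr')
      measurableSet_ball measure_ball_lt_top.ne
    rw [hw r hr, hw r' (le_trans hr hrr')] at hinc
    rw [Real.dist_eq, Real.dist_eq, abs_of_nonneg (sub_nonneg.2 hmono),
      abs_of_nonneg (by linarith)]
    exact hinc
  have hdist : ∀ r ∈ Ici (0 : ℝ), ∀ r' ∈ Ici (0 : ℝ),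
      dist (μ.real (s ∩ ball 0 r')) (μ.real (s ∩ ball 0 r)) ≤ dist (w r') (w r) := by
    intro r hr r' hr'
    rcases le_total r r' with h | h
    · exact hle r hr r' hr' h
    · rw [dist_comm, dist_comm (w r')]; exact hle r' hr' r hr h
  intro r hr
  have hwr : Tendsto (fun r' => dist (w r') (w r)) (𝓝[Ici 0] r) (𝓝 0) :=
    tendsto_iff_dist_tendsto_zero.1 ((by fun_prop : Continuous w).continuousWithinAt)
  exact tendsto_iff_dist_tendsto_zero.2 (squeeze_zero' (Eventually.of_forall fun _ => dist_nonneg)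
    (eventually_nhdsWithin_of_forall fun r' hr' => hdist r hr r' hr') hwr)

theorem exists_subset_measure_eq {s : Set E} (hs : MeasurableSet s)
    (hsb : Bornology.IsBounded s) {a : ℝ≥0∞} (ha : a ≤ μ s) :
    ∃ t ⊆ s, MeasurableSet t ∧ μ t = a := by
  obtain ⟨R, hR, hsR⟩ := hsb.subset_ball_lt 0 0
  have hsfin : μ s ≠ ∞ := measure_ne_top_of_subset hsR measure_ball_lt_top.ne
  have hcont := (continuousOn_measureReal_inter_ball μ s).mono
    (Icc_subset_Ici_self : Icc (0 : ℝ) R ⊆ Ici 0)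
  have hmem : a.toReal ∈ Icc (μ.real (s ∩ ball 0 0)) (μ.real (s ∩ ball 0 R)) := by
    rw [ball_zero, inter_empty, measureReal_empty, inter_eq_left.2 hsR]
    exact ⟨ENNReal.toReal_nonneg, ENNReal.toReal_mono hsfin ha⟩
  obtain ⟨r, -, hr⟩ := intermediate_value_Icc hR.le hcont hmem
  refine ⟨s ∩ ball 0 r, inter_subset_left, hs.inter measurableSet_ball, ?_⟩
  rw [← ENNReal.ofReal_toReal (ne_top_of_le_ne_top hsfin ha), ← hr]
  exact (ENNReal.ofReal_toReal (measure_ne_top_of_subset inter_subset_left hsfin)).symm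

theorem exists_subset_measure_eq_setIntegral_le {Ω : Set E} {f g : E → ℝ} (hΩ : MeasurableSet Ω)
    (hΩb : Bornology.IsBounded Ω) (hf : Measurable f) (hf01 : ∀ x ∈ Ω, f x ∈ Icc 0 1)
    (hg : Measurable g) (hgi : IntegrableOn g Ω μ) (hg0 : ∀ x ∈ Ω, 0 ≤ g x) :
    ∃ D ⊆ Ω, MeasurableSet D ∧ μ D = ENNReal.ofReal (∫ x in Ω, f x ∂μ) ∧
      ∫ x in D, g x ∂μ ≤ ∫ x in Ω, f x * g x ∂μ := by
  have hΩfin : μ Ω ≠ ∞ := hΩb.measure_lt_top.ne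
  have hA0 : 0 ≤ ∫ x in Ω, f x ∂μ := setIntegral_nonneg hΩ fun x hx => (hf01 x hx).1
  have hAΩ : ∫ x in Ω, f x ∂μ ≤ μ.real Ω := by
    simpa using setIntegral_mono_on (integrableOn_of_forall_mem_Icc_s3 hΩ hΩfin hf hf01)
      (integrableOn_const (C := (1 : ℝ)) hΩfin) hΩ fun x hx => (hf01 x hx).2
  -- If `∫_Ω f = |Ω|` there may be no threshold level (`g` may be unbounded), but `D = Ω` works.
  rcases (ENNReal.ofReal_le_of_le_toReal hAΩ).lt_or_eq with hlt | heq
  · obtain ⟨t, hL, hU⟩ := exists_measure_lt_le_measure_le hΩ hΩfin hg hg0 hlt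
    set L := Ω ∩ {x | g x < t}
    have hLm : MeasurableSet L := hΩ.inter (measurableSet_lt hg measurable_const)
    have hUm : MeasurableSet (Ω ∩ {x | g x ≤ t}) := hΩ.inter (measurableSet_le hg measurable_const)
    have hLU : L ⊆ Ω ∩ {x | g x ≤ t} :=
      inter_subset_inter_right _ (ofPred_subset_ofPred.2 fun _ => le_of_lt)
    obtain ⟨S, hSUL, hS, hSμ⟩ := exists_subset_measure_eq μ (hUm.diff hLm)
      (hΩb.subset (sdiff_subset.trans inter_subset_left))
      (a := ENNReal.ofReal (∫ x in Ω, f x ∂μ) - μ L) (by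
        rw [measure_sdiff hLU hLm.nullMeasurableSet
          (measure_ne_top_of_subset inter_subset_left hΩfin)]
        exact tsub_le_tsub_right hU _)
    have hDμ : μ (L ∪ S) = ENNReal.ofReal (∫ x in Ω, f x ∂μ) := by
      rw [measure_union (disjoint_of_subset_right hSUL disjoint_sdiff_right) hS, hSμ,
        add_tsub_cancel_of_le hL]
    have hDΩ : L ∪ S ⊆ Ω :=
      union_subset inter_subset_left (hSUL.trans (sdiff_subset.trans inter_subset_left))
    refine ⟨L ∪ S, hDΩ, hLm.union hS, hDμ, setIntegral_le_setIntegral_mul_of_sublevel (t := t)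
      hΩ hΩfin (hLm.union hS) hDΩ hf hf01 hgi
      (by rw [measureReal_def, hDμ, ENNReal.toReal_ofReal hA0]) ?_ ?_⟩
    · rintro x (hx | hx)
      exacts [le_of_lt hx.2, (hSUL hx).1.2]
    · rintro x ⟨hx, hxD⟩
      exact not_lt.1 fun hxt => hxD (Or.inl ⟨hx, hxt⟩)
  · refine ⟨Ω, subset_rfl, hΩ, heq.symm,
      (setIntegral_eq_setIntegral_mul_of_integral_eq_measureReal g hΩ hΩfin hf hf01 ?_).le⟩
    rw [measureReal_def, ← heq, ENNReal.toReal_ofReal hA0]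

end AddHaar

section FractionalEnergy

variable {n : ℕ} {s c : ℝ} {Ω : Set (EuclideanSpace ℝ (Fin n))}
  {u : EuclideanSpace ℝ (Fin n) → ℝ}

theorem fracEnergy_nonneg (hc : 0 ≤ c) (u : EuclideanSpace ℝ (Fin n) → ℝ) :
    0 ≤ fracEnergy n s c u := by
  unfold fracEnergy; positivity

theorem gagliardo_const_mul (a : ℝ) (u : EuclideanSpace ℝ (Fin n) → ℝ) :
    gagliardo n s (fun x => a * u x) = ENNReal.ofReal (a ^ 2) * gagliardo n s u := by
  unfold gagliardo
  rw [← lintegral_const_mul' _ _ ENNReal.ofReal_ne_top]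
  refine lintegral_congr fun x => ?_
  rw [← lintegral_const_mul' _ _ ENNReal.ofReal_ne_top]
  refine lintegral_congr fun y => ?_
  rw [← ENNReal.ofReal_mul (sq_nonneg a), ← mul_div_assoc]
  ring_nf

theorem fracEnergy_const_mul (a : ℝ) (u : EuclideanSpace ℝ (Fin n) → ℝ) :
    fracEnergy n s c (fun x => a * u x) = a ^ 2 * fracEnergy n s c u := by
  unfold fracEnergy
  rw [gagliardo_const_mul, ENNReal.toReal_mul, ENNReal.toReal_ofReal (sq_nonneg a)]
  ring

theorem fracEnergy_zero_dim (u : EuclideanSpace ℝ (Fin 0) → ℝ) : fracEnergy 0 s c u = 0 := by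
  have hpt : ∀ x y : EuclideanSpace ℝ (Fin 0), x = y := fun x y => PiLp.ext fun i => i.elim0
  simp [fracEnergy, gagliardo, hpt _ (0 : EuclideanSpace ℝ (Fin 0))]

theorem memHs0.const_mul (hu : memHs0 n s Ω u) (a : ℝ) : memHs0 n s Ω fun x => a * u x := by
  obtain ⟨hum, hu2, hug, hu0⟩ := hu
  refine ⟨measurable_const.mul hum, ?_, ?_, ?_⟩
  · simpa only [mul_pow] using hu2.const_mul (a ^ 2)
  · rw [gagliardo_const_mul]
    exact ENNReal.mul_lt_top ENNReal.ofReal_lt_top hug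
  · filter_upwards [hu0] with x hx hxΩ
    rw [hx hxΩ, mul_zero]

theorem memHs0.setIntegral_sq (hu : memHs0 n s Ω u) : ∫ x in Ω, u x ^ 2 = ∫ x, u x ^ 2 :=
  setIntegral_eq_integral_of_ae_compl_eq_zero <| hu.2.2.2.mono fun x hx hxΩ => by
    rw [hx hxΩ, sq, mul_zero]

theorem memHs0.exists_normalized (hu : memHs0 n s Ω u) (hpos : 0 < ∫ x, u x ^ 2) :
    ∃ a ≠ 0, memHs0 n s Ω (fun x => a * u x) ∧ ∫ x, (a * u x) ^ 2 = 1 := by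
  refine ⟨(√(∫ x, u x ^ 2))⁻¹, by positivity, hu.const_mul _, ?_⟩
  simp only [mul_pow, integral_const_mul, inv_pow, Real.sq_sqrt hpos.le]
  exact inv_mul_cancel₀ hpos.ne'

theorem memHs0.measure_ne_zero (hu : memHs0 n s Ω u) (hu1 : ∫ x, u x ^ 2 = 1) :
    volume Ω ≠ 0 := fun hΩ => by
  rw [← hu.setIntegral_sq, Measure.restrict_eq_zero.2 hΩ, integral_zero_measure] at hu1
  exact zero_ne_one hu1

end FractionalEnergy

section Eigenvalues

variable {n : ℕ} {s c α A h H M : ℝ} {Ω D : Set (EuclideanSpace ℝ (Fin n))}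
  {ρ u : EuclideanSpace ℝ (Fin n) → ℝ}

def AdmissibleDensity (Ω : Set (EuclideanSpace ℝ (Fin n))) (h H M : ℝ)
    (ρ : EuclideanSpace ℝ (Fin n) → ℝ) : Prop :=
  Measurable ρ ∧ (∀ x ∈ Ω, ρ x ∈ Icc h H) ∧ ∫ x in Ω, ρ x = M

theorem Theta_nonneg (hc : 0 ≤ c) : 0 ≤ Theta n s c Ω h H M :=
  Real.sInf_nonneg fun _ ⟨_, w, _, _, _, _, hJ, hv⟩ =>
    hv ▸ div_nonneg (fracEnergy_nonneg hc w) hJ.le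

theorem Theta_le (hc : 0 ≤ c) (hρ : AdmissibleDensity Ω h H M ρ) (hu : memHs0 n s Ω u)
    (hJ : 0 < ∫ x in Ω, ρ x * u x ^ 2) :
    Theta n s c Ω h H M ≤ fracEnergy n s c u / ∫ x in Ω, ρ x * u x ^ 2 :=
  csInf_le ⟨0, fun _ ⟨_, w, _, _, _, _, hJ, hv⟩ => hv ▸ div_nonneg (fracEnergy_nonneg hc w) hJ.le⟩
    ⟨ρ, u, hρ.1, hρ.2.1, hρ.2.2, hu, hJ, rfl⟩

theorem le_Theta {b : ℝ}
    (hne : ∃ ρ u, AdmissibleDensity Ω h H M ρ ∧ memHs0 n s Ω u ∧ 0 < ∫ x in Ω, ρ x * u x ^ 2)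
    (hb : ∀ ρ u, AdmissibleDensity Ω h H M ρ → memHs0 n s Ω u →
      0 < ∫ x in Ω, ρ x * u x ^ 2 → b ≤ fracEnergy n s c u / ∫ x in Ω, ρ x * u x ^ 2) :
    b ≤ Theta n s c Ω h H M := by
  obtain ⟨ρ, u, hρ, hu, hJ⟩ := hne
  refine le_csInf ⟨_, ρ, u, hρ.1, hρ.2.1, hρ.2.2, hu, hJ, rfl⟩ ?_
  rintro _ ⟨ρ, u, hρm, hρH, hρM, hu, hJ, rfl⟩
  exact hb ρ u ⟨hρm, hρH, hρM⟩ hu hJ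

theorem Theta_eq_zero_of_not_exists (hex : ¬∃ u, memHs0 n s Ω u ∧ ∫ x, u x ^ 2 = 1) :
    Theta n s c Ω h H M = 0 := by
  refine sInf_eq_zero_of_forall_mem_eq_zero ?_
  rintro _ ⟨ρ, w, -, -, -, hw, hJ, -⟩
  obtain ⟨a, -, hu, hu1⟩ :=
    hw.exists_normalized (integral_sq_pos_of_setIntegral_mul_sq_pos hw.2.1 hJ)
  exact (hex ⟨_, hu, hu1⟩).elim

theorem Theta_zero_dim {Ω : Set (EuclideanSpace ℝ (Fin 0))} : Theta 0 s c Ω h H M = 0 :=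
  sInf_eq_zero_of_forall_mem_eq_zero fun _ ⟨_, _, _, _, _, _, _, hv⟩ => by
    rw [hv, fracEnergy_zero_dim, zero_div]

theorem lamEV_nonneg (hc : 0 ≤ c) (hα : 0 ≤ α) (D : Set (EuclideanSpace ℝ (Fin n))) :
    0 ≤ lamEV n s c α Ω D :=
  Real.sInf_nonneg fun _ ⟨u, _, _, hv⟩ => hv ▸ add_nonneg (fracEnergy_nonneg hc u)
    (mul_nonneg hα (integral_nonneg fun x => sq_nonneg (u x)))

theorem lamEV_le (hc : 0 ≤ c) (hα : 0 ≤ α) (D : Set (EuclideanSpace ℝ (Fin n)))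
    (hu : memHs0 n s Ω u) (hu1 : ∫ x, u x ^ 2 = 1) :
    lamEV n s c α Ω D ≤ fracEnergy n s c u + α * ∫ x in D, u x ^ 2 :=
  csInf_le ⟨0, fun _ ⟨u, _, _, hv⟩ => hv ▸ add_nonneg (fracEnergy_nonneg hc u)
    (mul_nonneg hα (integral_nonneg fun x => sq_nonneg (u x)))⟩ ⟨u, hu, hu1, rfl⟩

theorem lamEV_eq_zero_of_not_exists (hex : ¬∃ u, memHs0 n s Ω u ∧ ∫ x, u x ^ 2 = 1) :
    lamEV n s c α Ω D = 0 :=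
  sInf_eq_zero_of_forall_mem_eq_zero fun _ ⟨u, hu, hu1, _⟩ => (hex ⟨u, hu, hu1⟩).elim

theorem lamEV_zero_dim {Ω D : Set (EuclideanSpace ℝ (Fin 0))} : lamEV 0 s c 0 Ω D = 0 :=
  sInf_eq_zero_of_forall_mem_eq_zero fun _ ⟨_, _, _, hv⟩ => by
    rw [hv, fracEnergy_zero_dim, zero_mul, add_zero]

theorem LamEV_le_lamEV (hc : 0 ≤ c) (hα : 0 ≤ α) (hDΩ : D ⊆ Ω) (hD : MeasurableSet D)
    (hDA : volume D = ENNReal.ofReal A) : LamEV n s c α A Ω ≤ lamEV n s c α Ω D :=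
  csInf_le ⟨0, fun _ ⟨D, _, _, _, hv⟩ => hv ▸ lamEV_nonneg hc hα D⟩ ⟨D, hDΩ, hD, hDA, rfl⟩

theorem LamEV_eq_zero_of_forall (hD : ∀ D, lamEV n s c α Ω D = 0) : LamEV n s c α A Ω = 0 :=
  sInf_eq_zero_of_forall_mem_eq_zero fun _ ⟨D, _, _, _, hv⟩ => hv ▸ hD D

end Eigenvalues

theorem nontrivial_euclideanSpace {n : ℕ} (hn : 0 < n) : Nontrivial (EuclideanSpace ℝ (Fin n)) :=
  have : NeZero n := ⟨hn.ne'⟩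
  inferInstance

section Relation

variable {n : ℕ} {s c h H M : ℝ} {Ω D : Set (EuclideanSpace ℝ (Fin n))}
  {ρ u : EuclideanSpace ℝ (Fin n) → ℝ}

theorem mul_Theta_le_fracEnergy_add (hc : 0 ≤ c) (hΩfin : volume Ω ≠ ∞)
    (hhH : h < H) (hDΩ : D ⊆ Ω) (hD : MeasurableSet D)
    (hDvol : (H - h) * (volume D).toReal = H * (volume Ω).toReal - M)
    (hu : memHs0 n s Ω u) (hu1 : ∫ x, u x ^ 2 = 1) :
    H * Theta n s c Ω h H M ≤
      fracEnergy n s c u + (H - h) * Theta n s c Ω h H M * ∫ x in D, u x ^ 2 := by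
  set Θ := Theta n s c Ω h H M
  set τ := ∫ x in D, u x ^ 2
  set ρ : EuclideanSpace ℝ (Fin n) → ℝ := fun x => H - (H - h) * D.indicator (fun _ => 1) x
  have hχ : IntegrableOn (D.indicator fun _ => (1 : ℝ)) Ω :=
    (integrableOn_const hΩfin).indicator hD
  have hρ : AdmissibleDensity Ω h H M ρ := by
    refine ⟨measurable_const.sub ((measurable_const.indicator hD).const_mul _),
      fun x _ => ?_, ?_⟩
    · by_cases hxD : x ∈ D <;> simp [ρ, hxD, hhH.le]
    · rw [integral_sub (integrableOn_const (C := H) hΩfin) (hχ.const_mul _), integral_const_mul,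
        setIntegral_indicator hD, inter_eq_right.2 hDΩ, setIntegral_const, setIntegral_const,
        smul_eq_mul, smul_eq_mul, mul_one, measureReal_def, measureReal_def]
      linarith
  have hJ : ∫ x in Ω, ρ x * u x ^ 2 = H - (H - h) * τ := by
    have hpt : ∀ x, ρ x * u x ^ 2 = H * u x ^ 2 - (H - h) * D.indicator (fun x => u x ^ 2) x :=
      fun x => by simp only [ρ, indicator]; split_ifs <;> ring
    simp only [hpt]
    rw [integral_sub (hu.2.1.const_mul H).integrableOn
        ((hu.2.1.indicator hD).const_mul _).integrableOn, integral_const_mul, integral_const_mul,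
      hu.setIntegral_sq, hu1, setIntegral_indicator hD, inter_eq_right.2 hDΩ, mul_one]
  have hΘ : 0 ≤ Θ := Theta_nonneg hc
  have hE := fracEnergy_nonneg (s := s) hc u
  rcases le_or_gt (H - (H - h) * τ) 0 with hJ0 | hJ0
  · nlinarith [mul_le_mul_of_nonneg_left (show H ≤ (H - h) * τ by linarith) hΘ]
  · have hΘle := Theta_le hc hρ hu (hJ ▸ hJ0)
    rw [hJ, le_div_iff₀ hJ0] at hΘle
    linarith

theorem mul_Theta_le_LamEV (hn : 0 < n) (hc : 0 ≤ c) (hΩ : MeasurableSet Ω)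
    (hΩb : Bornology.IsBounded Ω) (hhH : h < H) (hM1 : h * (volume Ω).toReal ≤ M)
    (hM2 : M ≤ H * (volume Ω).toReal) (hex : ∃ u, memHs0 n s Ω u ∧ ∫ x, u x ^ 2 = 1) :
    H * Theta n s c Ω h H M ≤
      LamEV n s c ((H - h) * Theta n s c Ω h H M) ((H * (volume Ω).toReal - M) / (H - h)) Ω := by
  have := nontrivial_euclideanSpace hn
  obtain ⟨u₀, hu₀, hu₀1⟩ := hex
  have hΩfin : volume Ω ≠ ∞ := hΩb.measure_lt_top.ne
  have hHh : 0 < H - h := sub_pos.2 hhH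
  have hA0 : 0 ≤ (H * (volume Ω).toReal - M) / (H - h) := div_nonneg (by linarith) hHh.le
  have hAΩ : ENNReal.ofReal ((H * (volume Ω).toReal - M) / (H - h)) ≤ volume Ω := by
    refine ENNReal.ofReal_le_of_le_toReal ((div_le_iff₀ hHh).2 ?_)
    linarith
  obtain ⟨D₀, hD₀Ω, hD₀, hD₀vol⟩ := exists_subset_measure_eq volume hΩ hΩb hAΩ
  refine le_csInf ⟨_, D₀, hD₀Ω, hD₀, hD₀vol, rfl⟩ ?_
  rintro _ ⟨D, hDΩ, hD, hDvol, rfl⟩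
  refine le_csInf ⟨_, u₀, hu₀, hu₀1, rfl⟩ ?_
  rintro _ ⟨u, hu, hu1, rfl⟩
  refine mul_Theta_le_fracEnergy_add hc hΩfin hhH hDΩ hD ?_ hu hu1
  rw [hDvol, ENNReal.toReal_ofReal hA0, mul_div_cancel₀ _ hHh.ne']

theorem LamEV_le_mul_fracEnergy_div (hn : 0 < n) (hc : 0 ≤ c) (hΩ : MeasurableSet Ω)
    (hΩb : Bornology.IsBounded Ω) (hhH : h < H) (hρ : AdmissibleDensity Ω h H M ρ)
    (hu : memHs0 n s Ω u) (hu1 : ∫ x, u x ^ 2 = 1) (hJ : 0 < ∫ x in Ω, ρ x * u x ^ 2) :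
    LamEV n s c ((H - h) * Theta n s c Ω h H M) ((H * (volume Ω).toReal - M) / (H - h)) Ω ≤
      H * (fracEnergy n s c u / ∫ x in Ω, ρ x * u x ^ 2) := by
  have := nontrivial_euclideanSpace hn
  have hΩfin : volume Ω ≠ ∞ := hΩb.measure_lt_top.ne
  have hHh : 0 < H - h := sub_pos.2 hhH
  set Θ := Theta n s c Ω h H M
  set J := ∫ x in Ω, ρ x * u x ^ 2
  set f : EuclideanSpace ℝ (Fin n) → ℝ := fun x => (H - ρ x) / (H - h)
  have hf01 : ∀ x ∈ Ω, f x ∈ Icc 0 1 := fun x hx => by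
    obtain ⟨hhρ, hρH⟩ := hρ.2.1 x hx
    exact ⟨div_nonneg (by linarith) hHh.le, (div_le_one hHh).2 (by linarith)⟩
  have hfint : ∫ x in Ω, f x = (H * (volume Ω).toReal - M) / (H - h) := by
    rw [integral_div, integral_sub (integrableOn_const (C := H) hΩfin)
      (integrableOn_of_forall_mem_Icc_s3 hΩ hΩfin hρ.1 hρ.2.1), hρ.2.2, setIntegral_const,
      smul_eq_mul, measureReal_def, mul_comm]
  have hfu : (H - h) * ∫ x in Ω, f x * u x ^ 2 = H - J := by
    have hpt : ∀ x, f x * u x ^ 2 = (H * u x ^ 2 - ρ x * u x ^ 2) / (H - h) := fun x => by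
      simp only [f]; ring
    simp only [hpt]
    rw [integral_div, integral_sub (hu.2.1.const_mul H).integrableOn
      (hu.2.1.integrableOn.bdd_mul_of_forall_mem_Icc hΩ hρ.1 hρ.2.1), integral_const_mul,
      hu.setIntegral_sq, hu1, mul_one, mul_div_cancel₀ _ hHh.ne']
  obtain ⟨D, hDΩ, hD, hDvol, hDu⟩ := exists_subset_measure_eq_setIntegral_le volume hΩ hΩb
    (f := f) ((hρ.1.const_sub H).div_const _) hf01 (hu.1.pow_const 2) hu.2.1.integrableOn
    fun x _ => sq_nonneg (u x)
  rw [hfint] at hDvol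
  have hΘ0 : 0 ≤ Θ := Theta_nonneg hc
  have hΘ : Θ ≤ fracEnergy n s c u / J := Theta_le hc hρ hu hJ
  have hHJ : 0 ≤ H - J := by
    rw [← hfu]
    exact mul_nonneg hHh.le
      (setIntegral_nonneg hΩ fun x hx => mul_nonneg (hf01 x hx).1 (sq_nonneg _))
  calc _ ≤ lamEV n s c ((H - h) * Θ) Ω D :=
        LamEV_le_lamEV hc (mul_nonneg hHh.le hΘ0) hDΩ hD hDvol
    _ ≤ fracEnergy n s c u + (H - h) * Θ * ∫ x in D, u x ^ 2 :=
        lamEV_le hc (mul_nonneg hHh.le hΘ0) D hu hu1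
    _ ≤ fracEnergy n s c u + Θ * (H - J) := by
        rw [← hfu, mul_comm Θ, mul_assoc, mul_assoc, mul_comm Θ]
        gcongr
    _ ≤ fracEnergy n s c u / J * J + fracEnergy n s c u / J * (H - J) := by
        rw [div_mul_cancel₀ _ hJ.ne']
        gcongr
    _ = H * (fracEnergy n s c u / J) := by ring

theorem LamEV_le_mul_Theta (hn : 0 < n) (hc : 0 ≤ c) (hΩ : MeasurableSet Ω)
    (hΩb : Bornology.IsBounded Ω) (hhH : h < H) (hM0 : 0 < M) (hM1 : h * (volume Ω).toReal ≤ M)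
    (hM2 : M ≤ H * (volume Ω).toReal) (hex : ∃ u, memHs0 n s Ω u ∧ ∫ x, u x ^ 2 = 1) :
    LamEV n s c ((H - h) * Theta n s c Ω h H M) ((H * (volume Ω).toReal - M) / (H - h)) Ω ≤
      H * Theta n s c Ω h H M := by
  obtain ⟨u₀, hu₀, hu₀1⟩ := hex
  have hV : 0 < (volume Ω).toReal :=
    ENNReal.toReal_pos (hu₀.measure_ne_zero hu₀1) hΩb.measure_lt_top.ne
  have hH : 0 < H := pos_of_mul_pos_left (hM0.trans_le hM2) hV.le
  rw [← div_le_iff₀' hH]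
  refine le_Theta ⟨fun _ => M / (volume Ω).toReal, u₀, ⟨measurable_const, fun _ _ => ⟨?_, ?_⟩, ?_⟩,
    hu₀, ?_⟩ fun ρ w hρ hw hJ => ?_
  · rwa [le_div_iff₀ hV]
  · rwa [div_le_iff₀ hV]
  · rw [setIntegral_const, smul_eq_mul, measureReal_def, mul_div_cancel₀ _ hV.ne']
  · rw [integral_const_mul, hu₀.setIntegral_sq, hu₀1, mul_one]
    positivity
  obtain ⟨a, ha, hu, hu1⟩ :=
    hw.exists_normalized (integral_sq_pos_of_setIntegral_mul_sq_pos hw.2.1 hJ)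
  have hJa : ∫ x in Ω, ρ x * (a * w x) ^ 2 = a ^ 2 * ∫ x in Ω, ρ x * w x ^ 2 := by
    simp only [mul_pow, mul_left_comm (ρ _), integral_const_mul]
  have := LamEV_le_mul_fracEnergy_div hn hc hΩ hΩb hhH hρ hu hu1 (hJa ▸ by positivity)
  rw [div_le_iff₀' hH]
  rwa [fracEnergy_const_mul, hJa, mul_div_mul_left _ _ (pow_ne_zero 2 ha)] at this

end Relation

theorem problem_relation_general {n : ℕ} (s c : ℝ) (hc : 0 < c)
    (Ω : Set (EuclideanSpace ℝ (Fin n))) (hΩopen : IsOpen Ω)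
    (hΩbdd : Bornology.IsBounded Ω)
    (h H M : ℝ) (hhH : h < H) (hM0 : 0 < M)
    (hM1 : h * (volume Ω).toReal ≤ M) (hM2 : M ≤ H * (volume Ω).toReal) :
    LamEV n s c ((H - h) * Theta n s c Ω h H M)
        ((H * (volume Ω).toReal - M) / (H - h)) Ω
      = H * Theta n s c Ω h H M := by
  rcases Nat.eq_zero_or_pos n with rfl | hn
  · rw [Theta_zero_dim, mul_zero, mul_zero]
    exact LamEV_eq_zero_of_forall fun _ => lamEV_zero_dim
  by_cases hex : ∃ u, memHs0 n s Ω u ∧ ∫ x, u x ^ 2 = 1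
  · exact le_antisymm
      (LamEV_le_mul_Theta hn hc.le hΩopen.measurableSet hΩbdd hhH hM0 hM1 hM2 hex)
      (mul_Theta_le_LamEV hn hc.le hΩopen.measurableSet hΩbdd hhH hM1 hM2 hex)
  · rw [Theta_eq_zero_of_not_exists hex, mul_zero, mul_zero]
    exact LamEV_eq_zero_of_forall fun _ => lamEV_eq_zero_of_not_exists hex

/-- with `α = (H − h)·Θ(h,H,M)` and `A = (H|Ω| − M)/(H − h)`, one has
`Λ_Ω(α, A) = H·Θ(h,H,M)`. -/
theorem problem_relation {n : ℕ} (s c : ℝ) (hs0 : 0 < s) (hs1 : s < 1) (hc : 0 < c)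
    (Ω : Set (EuclideanSpace ℝ (Fin n))) (hΩopen : IsOpen Ω) (hΩconn : IsConnected Ω)
    (hΩbdd : Bornology.IsBounded Ω)
    (h H M : ℝ) (hh : 0 ≤ h) (hhH : h < H) (hM0 : 0 < M)
    (hM1 : h * (volume Ω).toReal ≤ M) (hM2 : M ≤ H * (volume Ω).toReal) :
    LamEV n s c ((H - h) * Theta n s c Ω h H M)
        ((H * (volume Ω).toReal - M) / (H - h)) Ω
      = H * Theta n s c Ω h H M :=
  problem_relation_general s c hc Ω hΩopen hΩbdd h H M hhH hM0 hM1 hM2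
end
end

section
/- Let 0 < s < 1, let N be a positive integer, let b > 0, and let h : ℝ → ℝ be integrable, nonnegative, and vanishing outside [b, b+1]. Define v : ℝ² → ℝ by v(ξ) = h(|ξ|)·sin(N·θ(ξ)), where θ(ξ) ∈ [0,2π) is the angular polar coordinate of ξ ≠ 0. Let P(x,y) = C_{2,s}·y^{2s}/(|x|² + y²)^{1+s} be the Poisson kernel for the Caffarelli–Silvestre extension in ℝ²×(0,∞), normalized so that ∫_{ℝ²} P(x,y) dx = 1 for every y > 0, and define V(x,y) = ∫_{ℝ²} P(x − ξ, y) v(ξ) dξ. Then for every rotation angle φ ∈ ℝ, every x ∈ ℝ², and every y > 0, V(R_φ x, y) = cos(Nφ)·V(x,y) + sin(Nφ)·V(R_{π/(2N)} x, y), where R_φ denotes the rotation of ℝ² by angle φ about the origin. -/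
/-!
Rotating the argument of `v` by `φ` shifts `arg` by `φ` modulo `2π`, so
`sin (N (arg ξ + φ)) = cos (Nφ) sin (N arg ξ) + sin (Nφ) sin (N arg ξ + π/2)`, i.e.
`v ∘ R_φ = cos (Nφ) v + sin (Nφ) (v ∘ R_{π/(2N)})`. The Poisson kernel is radial and Lebesgue
measure is rotation invariant, so `V (R_α x, y) = ∫ P (x - ξ, y) v (R_α ξ) dξ`, and the identity
passes through the integral by linearity. The integrals converge because `h(|ξ|)` is integrable
on `ℂ` (polar coordinates) and the kernel is continuous while `v` has compact support.
-/

open MeasureTheory Real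

open Complex in
lemma Complex.norm_exp_ofReal_mul_I_mul (α : ℝ) (z : ℂ) : ‖exp (α * I) * z‖ = ‖z‖ := by
  rw [norm_mul, norm_exp_ofReal_mul_I, one_mul]

section Rotation

open Complex

variable {E : Type*} [NormedAddCommGroup E]

lemma measurePreserving_exp_ofReal_mul_I_mul (α : ℝ) :
    MeasurePreserving (fun z : ℂ => exp (α * I) * z) := by
  have hrot : ⇑(rotation (Circle.exp α)) = fun z : ℂ => exp (α * I) * z := by
    ext z; simp [rotation_apply, Circle.coe_exp]
  exact hrot ▸ (rotation (Circle.exp α)).measurePreserving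

lemma integral_comp_exp_ofReal_mul_I_mul [NormedSpace ℝ E] (α : ℝ) (g : ℂ → E) :
    ∫ z, g (exp (α * I) * z) = ∫ z, g z :=
  (measurePreserving_exp_ofReal_mul_I_mul α).integral_comp
    (Homeomorph.mulLeft₀ _ (Complex.exp_ne_zero _)).measurableEmbedding g

lemma MeasureTheory.Integrable.comp_exp_ofReal_mul_I_mul {g : ℂ → E} (hg : Integrable g) (α : ℝ) :
    Integrable fun z => g (exp (α * I) * z) :=
  (measurePreserving_exp_ofReal_mul_I_mul α).integrable_comp_of_integrable hg

lemma integral_radial_mul_comp_exp_ofReal_mul_I_mul (k : ℝ → ℝ) (f : ℂ → ℝ) (x : ℂ) (α : ℝ) :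
    ∫ ξ, k ‖exp (α * I) * x - ξ‖ * f ξ = ∫ ξ, k ‖x - ξ‖ * f (exp (α * I) * ξ) := by
  rw [← integral_comp_exp_ofReal_mul_I_mul α]
  simp_rw [← mul_sub, norm_exp_ofReal_mul_I_mul]

lemma sin_nat_mul_arg_exp_ofReal_mul_I_mul (N : ℕ) (α : ℝ) {ξ : ℂ} (hξ : ξ ≠ 0) :
    Real.sin (N * arg (exp (α * I) * ξ)) = Real.sin (N * (α + arg ξ)) := by
  have harg : (arg (exp (α * I) * ξ) : Real.Angle) = (α + arg ξ : ℝ) := by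
    rw [arg_mul_coe_angle (exp_ne_zero _) hξ, arg_exp_mul_I, Real.Angle.coe_toIocMod,
      Real.Angle.coe_add]
  simp only [← Real.Angle.sin_coe, ← nsmul_eq_mul, Real.Angle.coe_nsmul, harg]

lemma sin_nat_mul_arg_exp_ofReal_mul_I_mul_eq {N : ℕ} (hN : N ≠ 0) (φ : ℝ) (ξ : ℂ) :
    Real.sin (N * arg (exp (φ * I) * ξ)) = Real.cos (N * φ) * Real.sin (N * arg ξ) +
      Real.sin (N * φ) * Real.sin (N * arg (exp ((π / (2 * N) : ℝ) * I) * ξ)) := by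
  rcases eq_or_ne ξ 0 with rfl | hξ
  · simp
  have hquarter : (N : ℝ) * (π / (2 * N)) = π / 2 := by field_simp
  rw [sin_nat_mul_arg_exp_ofReal_mul_I_mul N _ hξ, sin_nat_mul_arg_exp_ofReal_mul_I_mul N _ hξ,
    mul_add, mul_add, hquarter, add_comm (π / 2), Real.sin_add_pi_div_two, Real.sin_add]
  ring

end Rotation

lemma integrable_fun_norm_of_support_subset_Icc {E F : Type*} [NormedAddCommGroup E]
    [NormedSpace ℝ E] [Nontrivial E] [FiniteDimensional ℝ E] [MeasurableSpace E] [BorelSpace E]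
    [NormedAddCommGroup F] [NormedSpace ℝ F] (μ : Measure E) [μ.IsAddHaarMeasure]
    {f : ℝ → F} {a c : ℝ} (hf : Integrable f) (hsupp : Function.support f ⊆ Set.Icc a c) :
    Integrable (fun x => f ‖x‖) μ := by
  rw [integrable_fun_norm_addHaar]
  have hsupp' : Function.support (fun r : ℝ => r ^ (Module.finrank ℝ E - 1) • f r) ⊆ Set.Icc a c :=
    (Function.support_smul_subset_right _ _).trans hsupp
  refine Integrable.integrableOn ?_
  rw [← integrableOn_iff_integrable_of_support_subset hsupp']
  exact hf.integrableOn.continuousOn_smul (by fun_prop) isCompact_Icc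

lemma MeasureTheory.Integrable.continuous_mul_of_support_subset {X : Type*} [TopologicalSpace X]
    [T2Space X] [MeasurableSpace X] [OpensMeasurableSpace X] {μ : Measure X} {f g : X → ℝ} {K : Set X}
    (hg : Integrable g μ) (hf : Continuous f) (hK : IsCompact K)
    (hsupp : Function.support g ⊆ K) : Integrable (fun x => f x * g x) μ :=
  (integrableOn_iff_integrable_of_support_subset
    ((Function.support_mul_subset_right f g).trans hsupp)).1
    (hg.integrableOn.continuousOn_mul hf.continuousOn hK)

lemma continuous_const_div_rpow_sq_add_sq (c p : ℝ) {y : ℝ} (hy : y ≠ 0) :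
    Continuous fun r : ℝ => c / (r ^ 2 + y ^ 2) ^ p := by
  have hpos (r : ℝ) : 0 < r ^ 2 + y ^ 2 := by positivity
  exact continuous_const.div ((by fun_prop : Continuous fun r : ℝ => r ^ 2 + y ^ 2).rpow_const
    fun r => .inl (hpos r).ne') fun r => (rpow_pos_of_pos (hpos r) _).ne'

section RadialConvolution

open Complex

variable {k : ℝ → ℝ} {f : ℂ → ℝ} {R : ℝ}

lemma integrable_radial_mul_comp_exp_ofReal_mul_I_mul (hk : Continuous k) (hf : Integrable f)
    (hsupp : Function.support f ⊆ Metric.closedBall 0 R) (x : ℂ) (α : ℝ) :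
    Integrable fun ξ => k ‖x - ξ‖ * f (exp (α * I) * ξ) := by
  refine (hf.comp_exp_ofReal_mul_I_mul α).continuous_mul_of_support_subset (by fun_prop)
    (isCompact_closedBall 0 R) fun ξ hξ => ?_
  simpa [norm_exp_ofReal_mul_I_mul] using hsupp hξ

lemma integral_radial_mul_exp_ofReal_mul_I_mul_eq (hk : Continuous k) (hf : Integrable f)
    (hsupp : Function.support f ⊆ Metric.closedBall 0 R) {φ β a c : ℝ}
    (hrel : ∀ ξ, f (exp (φ * I) * ξ) = a * f ξ + c * f (exp (β * I) * ξ)) (x : ℂ) :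
    ∫ ξ, k ‖exp (φ * I) * x - ξ‖ * f ξ =
      a * (∫ ξ, k ‖x - ξ‖ * f ξ) + c * ∫ ξ, k ‖exp (β * I) * x - ξ‖ * f ξ := by
  have hint₀ : Integrable fun ξ => k ‖x - ξ‖ * f ξ := by
    simpa using integrable_radial_mul_comp_exp_ofReal_mul_I_mul hk hf hsupp x 0
  rw [integral_radial_mul_comp_exp_ofReal_mul_I_mul, integral_radial_mul_comp_exp_ofReal_mul_I_mul,
    ← integral_const_mul, ← integral_const_mul, ← integral_add (hint₀.const_mul a)
      ((integrable_radial_mul_comp_exp_ofReal_mul_I_mul hk hf hsupp x β).const_mul c)]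
  congr 1 with ξ
  rw [hrel]
  ring

end RadialConvolution

theorem extension_rotation_formula_general (s : ℝ)
    (N : ℕ) (hN : 0 < N) (b : ℝ)
    (h : ℝ → ℝ) (hhint : Integrable h)
    (hhsupp : ∀ t, t ∉ Set.Icc b (b + 1) → h t = 0)
    (C : ℝ)
    (v : ℂ → ℝ) (hv : ∀ ξ : ℂ, v ξ = h ‖ξ‖ * Real.sin (N * Complex.arg ξ))
    (V : ℂ → ℝ → ℝ)
    (hV : ∀ (x : ℂ) (y : ℝ), V x y =
      ∫ ξ : ℂ, C * y ^ (2 * s) / (‖x - ξ‖ ^ 2 + y ^ 2) ^ (1 + s) * v ξ) :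
    ∀ (φ : ℝ) (x : ℂ) (y : ℝ), 0 < y →
      V (Complex.exp (φ * Complex.I) * x) y =
        Real.cos (N * φ) * V x y +
          Real.sin (N * φ) * V (Complex.exp ((π / (2 * N)) * Complex.I) * x) y := by
  intro φ x y hy
  have hvint : Integrable v := by
    have hrad := integrable_fun_norm_of_support_subset_Icc (volume : Measure ℂ) hhint
      (Function.support_subset_iff'.2 hhsupp)
    rw [funext hv]
    exact hrad.mul_bdd (by fun_prop) (ae_of_all _ fun ξ => abs_sin_le_one _)
  have hvsupp : Function.support v ⊆ Metric.closedBall 0 (b + 1) := fun ξ hξ => by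
    rw [mem_closedBall_zero_iff]
    by_contra hfar
    exact hξ (by rw [hv, hhsupp _ fun hmem => hfar hmem.2, zero_mul])
  have hrel (ξ : ℂ) : v (Complex.exp (φ * Complex.I) * ξ) = Real.cos (N * φ) * v ξ +
      Real.sin (N * φ) * v (Complex.exp ((π / (2 * N) : ℝ) * Complex.I) * ξ) := by
    simp only [hv, Complex.norm_exp_ofReal_mul_I_mul,
      sin_nat_mul_arg_exp_ofReal_mul_I_mul_eq hN.ne' φ ξ]
    ring
  have hβ : (π / (2 * N) : ℂ) = ((π / (2 * N) : ℝ) : ℂ) := by push_cast; rfl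
  rw [hV, hV, hV, hβ]
  exact integral_radial_mul_exp_ofReal_mul_I_mul_eq
    (k := fun r => C * y ^ (2 * s) / (r ^ 2 + y ^ 2) ^ (1 + s))
    (continuous_const_div_rpow_sq_add_sq _ _ hy.ne') hvint hvsupp hrel x

/-- rotation formula for the Caffarelli–Silvestre extension of
`v(ξ) = h(|ξ|)·sin(N·θ(ξ))`: for every rotation angle `φ`, every `x ∈ ℝ² ≅ ℂ` and `y > 0`,
`V(R_φ x, y) = cos(Nφ)·V(x,y) + sin(Nφ)·V(R_{π/(2N)} x, y)`. -/
theorem extension_rotation_formula (s : ℝ) (hs0 : 0 < s) (hs1 : s < 1)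
    (N : ℕ) (hN : 0 < N) (b : ℝ) (hb : 0 < b)
    (h : ℝ → ℝ) (hhmeas : Measurable h) (hhint : Integrable h)
    (hhnonneg : ∀ t, 0 ≤ h t)
    (hhsupp : ∀ t, t ∉ Set.Icc b (b + 1) → h t = 0)
    (C : ℝ) (hC : 0 < C)
    (hnorm : ∀ y : ℝ, 0 < y →
      (∫ x : ℂ, C * y ^ (2 * s) / (‖x‖ ^ 2 + y ^ 2) ^ (1 + s)) = 1)
    (v : ℂ → ℝ) (hv : ∀ ξ : ℂ, v ξ = h ‖ξ‖ * Real.sin (N * Complex.arg ξ))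
    (V : ℂ → ℝ → ℝ)
    (hV : ∀ (x : ℂ) (y : ℝ), V x y =
      ∫ ξ : ℂ, C * y ^ (2 * s) / (‖x - ξ‖ ^ 2 + y ^ 2) ^ (1 + s) * v ξ) :
    ∀ (φ : ℝ) (x : ℂ) (y : ℝ), 0 < y →
      V (Complex.exp (φ * Complex.I) * x) y =
        Real.cos (N * φ) * V x y +
          Real.sin (N * φ) * V (Complex.exp ((π / (2 * N)) * Complex.I) * x) y :=
  extension_rotation_formula_general s N hN b h hhint hhsupp C v hv V hV
end

section
/- Let 0 < s < 1, let N be a positive integer, let b > 0, and let h : [b,b+1] → ℝ be continuous and nonnegative. Define, for r ≥ 0 and y > 0, H(r,y) := C_{2,s}·y^{2s} ∫_b^{b+1} ∫_0^{2π} t·h(t)·cos(Nθ)/(r² + t² + y² − 2rt·cosθ)^{1+s} dθ dt, and let H̃(r,y) be given by the same formula with cos(Nθ) replaced by 1. Then 0 ≤ H(r,y) ≤ H̃(r,y) for all r ≥ 0 and y > 0. -/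
/-!
Writing `c ^ (-p) = Γ(p)⁻¹ ∫₀^∞ u ^ (p - 1) e ^ (-c u) du` and exchanging the integrals, the
angular integral `∫₀^{2π} cos (n θ) (A - B cos θ) ^ (-p) dθ` becomes a positive average of
`∫₀^{2π} cos (n θ) e ^ (B u cos θ) dθ`. Expanding the exponential, these are nonnegative
combinations of `∫₀^{2π} cos (n θ) cos θ ^ m dθ`, which are nonnegative by induction on `m` via
`cos (n θ) cos θ = (cos ((n + 1) θ) + cos ((n - 1) θ)) / 2`. Hence the `t`-integrand of `H` is
nonnegative, and `cos (N θ) ≤ 1` gives `H ≤ H̃`.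
-/

open MeasureTheory Real Set
open scoped Nat

theorem integral_cos_int_mul_eq_zero {n : ℤ} (hn : n ≠ 0) :
    ∫ θ in (0 : ℝ)..2 * π, cos (n * θ) = 0 := by
  have hn' : (n : ℝ) ≠ 0 := Int.cast_ne_zero.mpr hn
  rw [intervalIntegral.integral_comp_mul_left (fun x => cos x) hn', integral_cos, mul_zero,
    sin_zero, show (n : ℝ) * (2 * π) = (2 * n : ℤ) * π by push_cast; ring, sin_int_mul_pi]
  simp

theorem integral_cos_int_mul_mul_cos_pow_nonneg (m : ℕ) (n : ℤ) :
    0 ≤ ∫ θ in (0 : ℝ)..2 * π, cos (n * θ) * cos θ ^ m := by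
  induction m generalizing n with
  | zero =>
    rcases eq_or_ne n 0 with rfl | hn
    · simp [pi_pos.le]
    · simp [integral_cos_int_mul_eq_zero hn]
  | succ m ih =>
    have product_to_sum : ∀ θ : ℝ, cos (n * θ) * cos θ ^ (m + 1) =
        (cos ((n + 1 : ℤ) * θ) * cos θ ^ m + cos ((n - 1 : ℤ) * θ) * cos θ ^ m) / 2 := by
      intro θ
      push_cast
      rw [add_mul, sub_mul, one_mul, cos_add, cos_sub, pow_succ]
      ring
    have hint (k : ℤ) :
        IntervalIntegrable (fun θ => cos (k * θ) * cos θ ^ m) volume 0 (2 * π) := by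
      apply Continuous.intervalIntegrable; fun_prop
    simp_rw [product_to_sum, intervalIntegral.integral_div,
      intervalIntegral.integral_add (hint _) (hint _)]
    have := ih (n + 1)
    have := ih (n - 1)
    positivity

theorem integral_cos_int_mul_mul_exp_mul_cos_nonneg (n : ℤ) {z : ℝ} (hz : 0 ≤ z) :
    0 ≤ ∫ θ in (0 : ℝ)..2 * π, cos (n * θ) * exp (z * cos θ) := by
  have hseries :
      HasSum (fun m : ℕ => ∫ θ in (0 : ℝ)..2 * π, cos (n * θ) * ((z * cos θ) ^ m / m !))
        (∫ θ in (0 : ℝ)..2 * π, cos (n * θ) * exp (z * cos θ)) := by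
    refine intervalIntegral.hasSum_integral_of_dominated_convergence (fun m _ => z ^ m / m !)
      (fun m => by fun_prop) (fun m => .of_forall fun θ _ => ?_)
      (.of_forall fun θ _ => Real.summable_pow_div_factorial z) intervalIntegrable_const
      (.of_forall fun θ _ =>
        (Real.exp_eq_exp_ℝ ▸ NormedSpace.expSeries_div_hasSum_exp (z * cos θ)).mul_left _)
    rw [norm_mul, norm_div, norm_pow, norm_mul, Real.norm_of_nonneg hz, RCLike.norm_natCast]
    have hcos : ‖cos θ‖ ≤ 1 := abs_cos_le_one θ
    calc ‖cos (n * θ)‖ * ((z * ‖cos θ‖) ^ m / m !) ≤ 1 * ((z * 1) ^ m / m !) := by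
          gcongr
          exact abs_cos_le_one _
      _ = z ^ m / m ! := by ring
  refine hseries.nonneg fun m => ?_
  have hterm : ∀ θ : ℝ, cos (n * θ) * ((z * cos θ) ^ m / m !) =
      z ^ m / m ! * (cos (n * θ) * cos θ ^ m) := fun θ => by ring
  simp_rw [hterm, intervalIntegral.integral_const_mul]
  have := integral_cos_int_mul_mul_cos_pow_nonneg m n
  positivity

theorem mul_cos_le_abs (B θ : ℝ) : B * cos θ ≤ |B| :=
  (le_abs_self _).trans <| by
    rw [abs_mul]; exact mul_le_of_le_one_right (abs_nonneg B) (abs_cos_le_one _)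

theorem rpow_neg_eq_inv_Gamma_mul_integral {p c : ℝ} (hp : 0 < p) (hc : 0 < c) :
    c ^ (-p) = (Gamma p)⁻¹ * ∫ u in Ioi 0, u ^ (p - 1) * exp (-(c * u)) := by
  rw [integral_rpow_mul_exp_neg_mul_Ioi hp hc, one_div, inv_rpow hc.le, ← rpow_neg hc.le]
  field_simp [(Gamma_pos_of_pos hp).ne']

theorem integrableOn_rpow_mul_exp_neg_mul {p c : ℝ} (hp : 0 < p) (hc : 0 < c) :
    IntegrableOn (fun u : ℝ => u ^ (p - 1) * exp (-(c * u))) (Ioi 0) :=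
  .of_integral_ne_zero <| by
    rw [integral_rpow_mul_exp_neg_mul_Ioi hp hc]
    exact (mul_pos (rpow_pos_of_pos (by positivity) _) (Gamma_pos_of_pos hp)).ne'

theorem integrable_cos_mul_rpow_mul_exp_neg_mul_prod (n : ℤ) {p A B : ℝ} (hp : 0 < p)
    (hBA : |B| < A) :
    Integrable
      (fun q : ℝ × ℝ => cos (n * q.1) * (q.2 ^ (p - 1) * exp (-((A - B * cos q.1) * q.2))))
      ((volume.restrict (Ioc 0 (2 * π))).prod (volume.restrict (Ioi 0))) := by
  have hS : MeasurableSet (Ioc (0 : ℝ) (2 * π) ×ˢ Ioi (0 : ℝ)) :=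
    measurableSet_Ioc.prod measurableSet_Ioi
  have hdom :
      Integrable (fun q : ℝ × ℝ => (1 : ℝ) * (q.2 ^ (p - 1) * exp (-((A - |B|) * q.2))))
        ((volume.restrict (Ioc 0 (2 * π))).prod (volume.restrict (Ioi 0))) :=
    (integrable_const 1).mul_prod (integrableOn_rpow_mul_exp_neg_mul hp (by linarith))
  rw [Measure.prod_restrict] at hdom ⊢
  refine hdom.mono' ?_ ?_
  · refine ContinuousOn.aestronglyMeasurable ?_ hS
    refine (Continuous.continuousOn (by fun_prop)).mul (ContinuousOn.mul ?_ (by fun_prop))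
    exact continuousOn_snd.rpow_const fun q hq => Or.inl hq.2.ne'
  · filter_upwards [ae_restrict_mem hS] with q hq
    have hu : (0 : ℝ) < q.2 := hq.2
    have := mul_cos_le_abs B q.1
    rw [norm_mul, norm_mul, Real.norm_of_nonneg (rpow_nonneg hu.le _),
      Real.norm_of_nonneg (exp_nonneg _)]
    gcongr
    exact abs_cos_le_one _

noncomputable def angularKernel (n : ℤ) (p A B : ℝ) : ℝ :=
  ∫ θ in (0 : ℝ)..2 * π, cos (n * θ) / (A - B * cos θ) ^ p

theorem sub_mul_cos_pos {A B : ℝ} (hBA : |B| < A) (θ : ℝ) : 0 < A - B * cos θ := by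
  linarith [mul_cos_le_abs B θ]

theorem angularKernel_nonneg (n : ℤ) {p A B : ℝ} (hp : 0 < p) (hB : 0 ≤ B) (hBA : B < A) :
    0 ≤ angularKernel n p A B := by
  have hBA' : |B| < A := by rwa [abs_of_nonneg hB]
  have hrep : ∀ θ : ℝ, cos (n * θ) / (A - B * cos θ) ^ p = (Gamma p)⁻¹ *
      ∫ u in Ioi 0, cos (n * θ) * (u ^ (p - 1) * exp (-((A - B * cos θ) * u))) := fun θ => by
    rw [div_eq_mul_inv, ← rpow_neg (sub_mul_cos_pos hBA' θ).le,
      rpow_neg_eq_inv_Gamma_mul_integral hp (sub_mul_cos_pos hBA' θ), integral_const_mul]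
    ring
  rw [angularKernel, intervalIntegral.integral_of_le (by positivity),
    integral_congr_ae (.of_forall hrep), integral_const_mul,
    integral_integral_swap (integrable_cos_mul_rpow_mul_exp_neg_mul_prod n hp hBA')]
  refine mul_nonneg (inv_nonneg.2 (Gamma_pos_of_pos hp).le)
    (setIntegral_nonneg measurableSet_Ioi fun u (hu : 0 < u) => ?_)
  have hsplit : ∀ θ : ℝ, cos (n * θ) * (u ^ (p - 1) * exp (-((A - B * cos θ) * u))) =
      u ^ (p - 1) * exp (-(A * u)) * (cos (n * θ) * exp (B * u * cos θ)) := fun θ => by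
    rw [show -((A - B * cos θ) * u) = -(A * u) + B * u * cos θ by ring, exp_add]
    ring
  simp_rw [hsplit, integral_const_mul]
  have := integral_cos_int_mul_mul_exp_mul_cos_nonneg n (mul_nonneg hB hu.le)
  rw [intervalIntegral.integral_of_le (by positivity)] at this
  positivity

theorem continuous_div_rpow_sub_mul_cos {A B : ℝ} (hBA : |B| < A) (p : ℝ) {f : ℝ → ℝ}
    (hf : Continuous f) : Continuous fun θ => f θ / (A - B * cos θ) ^ p :=
  hf.div ((continuous_const.sub (continuous_const.mul continuous_cos)).rpow_const
    fun θ => .inl (sub_mul_cos_pos hBA θ).ne')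
    fun θ => (rpow_pos_of_pos (sub_mul_cos_pos hBA θ) p).ne'

theorem angularKernel_le_angularKernel_zero (n : ℤ) (p : ℝ) {A B : ℝ} (hBA : |B| < A) :
    angularKernel n p A B ≤ angularKernel 0 p A B := by
  refine intervalIntegral.integral_mono_on (by positivity)
    ((continuous_div_rpow_sub_mul_cos hBA p (by fun_prop)).intervalIntegrable _ _)
    ((continuous_div_rpow_sub_mul_cos hBA p (by fun_prop)).intervalIntegrable _ _) fun θ _ => ?_
  rw [Int.cast_zero, zero_mul, cos_zero]
  gcongr
  exacts [(rpow_pos_of_pos (sub_mul_cos_pos hBA θ) p).le, cos_le_one _]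

theorem Continuous.angularKernel (n : ℤ) (p : ℝ) {A B : ℝ → ℝ} (hA : Continuous A)
    (hB : Continuous B) (hpos : ∀ t θ, 0 < A t - B t * cos θ) :
    Continuous fun t => angularKernel n p (A t) (B t) :=
  intervalIntegral.continuous_parametric_intervalIntegral_of_continuous' (by
    refine Continuous.div (by fun_prop) ((by fun_prop : Continuous fun q : ℝ × ℝ =>
      A q.1 - B q.1 * cos q.2).rpow_const fun q => .inl (hpos q.1 q.2).ne') fun q =>
        (rpow_pos_of_pos (hpos q.1 q.2) p).ne') _ _

theorem extension_comparison_general (s : ℝ) (hs0 : 0 < s)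
    (N : ℕ) (b : ℝ) (hb : 0 < b)
    (C : ℝ) (hC : 0 < C)
    (h : ℝ → ℝ) (hhcont : ContinuousOn h (Set.Icc b (b + 1)))
    (hhnonneg : ∀ t ∈ Set.Icc b (b + 1), 0 ≤ h t)
    (H Htil : ℝ → ℝ → ℝ)
    (hH : ∀ r y : ℝ, H r y = C * y ^ (2 * s) *
      ∫ t in b..(b + 1), ∫ θ in (0 : ℝ)..(2 * π),
        t * h t * Real.cos (N * θ) /
          (r ^ 2 + t ^ 2 + y ^ 2 - 2 * r * t * Real.cos θ) ^ (1 + s))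
    (hHtil : ∀ r y : ℝ, Htil r y = C * y ^ (2 * s) *
      ∫ t in b..(b + 1), ∫ θ in (0 : ℝ)..(2 * π),
        t * h t / (r ^ 2 + t ^ 2 + y ^ 2 - 2 * r * t * Real.cos θ) ^ (1 + s)) :
    ∀ r y : ℝ, 0 ≤ r → 0 < y → 0 ≤ H r y ∧ H r y ≤ Htil r y := by
  intro r y hr hy
  set K : ℤ → ℝ → ℝ := fun n t =>
    angularKernel n (1 + s) (r ^ 2 + t ^ 2 + y ^ 2) (2 * r * t)
  have hBA : ∀ t, |2 * r * t| < r ^ 2 + t ^ 2 + y ^ 2 := fun t => by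
    rw [abs_mul, abs_of_nonneg (by positivity : 0 ≤ 2 * r)]
    nlinarith [sq_abs t, sq_nonneg (r - |t|)]
  have hK : ∀ n, Continuous (K n) := fun n =>
    Continuous.angularKernel n _ (by fun_prop) (by fun_prop) fun t => sub_mul_cos_pos (hBA t)
  have hH' : H r y = C * y ^ (2 * s) * ∫ t in b..(b + 1), t * h t * K N t := by
    refine (hH r y).trans (congrArg _ (intervalIntegral.integral_congr fun t _ => ?_))
    simp only [K, angularKernel, ← intervalIntegral.integral_const_mul, Int.cast_natCast,
      mul_div_assoc]
  have hHtil' : Htil r y = C * y ^ (2 * s) * ∫ t in b..(b + 1), t * h t * K 0 t := by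
    refine (hHtil r y).trans (congrArg _ (intervalIntegral.integral_congr fun t _ => ?_))
    simp only [K, angularKernel, ← intervalIntegral.integral_const_mul, Int.cast_zero, zero_mul,
      cos_zero, mul_one_div]
  have hw : ∀ t ∈ Icc b (b + 1), 0 ≤ t * h t := fun t ht =>
    mul_nonneg (hb.le.trans ht.1) (hhnonneg t ht)
  have hint : ∀ n, IntervalIntegrable (fun t => t * h t * K n t) volume b (b + 1) := fun n =>
    ((continuousOn_id.mul hhcont).mul (hK n).continuousOn).intervalIntegrable_of_Icc (by linarith)
  rw [hH', hHtil']
  constructor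
  · refine mul_nonneg (by positivity)
      (intervalIntegral.integral_nonneg (by linarith) fun t ht => ?_)
    exact mul_nonneg (hw t ht) (angularKernel_nonneg _ (by linarith)
      (by have := hb.le.trans ht.1; positivity) (lt_of_abs_lt (hBA t)))
  · refine mul_le_mul_of_nonneg_left
      (intervalIntegral.integral_mono_on (by linarith) (hint N) (hint 0) fun t ht => ?_)
      (by positivity)
    exact mul_le_mul_of_nonneg_left (angularKernel_le_angularKernel_zero _ _ (hBA t)) (hw t ht)

/-- the angular-mode extension `H(r,y)` (with factor `cos(Nθ)`) of a
nonnegative continuous profile `h` satisfies `0 ≤ H ≤ H̃`, where `H̃` is the radial extension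
(the same formula with `cos(Nθ)` replaced by `1`). -/
theorem extension_comparison (s : ℝ) (hs0 : 0 < s) (hs1 : s < 1)
    (N : ℕ) (hN : 0 < N) (b : ℝ) (hb : 0 < b)
    (C : ℝ) (hC : 0 < C)
    (h : ℝ → ℝ) (hhcont : ContinuousOn h (Set.Icc b (b + 1)))
    (hhnonneg : ∀ t ∈ Set.Icc b (b + 1), 0 ≤ h t)
    (H Htil : ℝ → ℝ → ℝ)
    (hH : ∀ r y : ℝ, H r y = C * y ^ (2 * s) *
      ∫ t in b..(b + 1), ∫ θ in (0 : ℝ)..(2 * π),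
        t * h t * Real.cos (N * θ) /
          (r ^ 2 + t ^ 2 + y ^ 2 - 2 * r * t * Real.cos θ) ^ (1 + s))
    (hHtil : ∀ r y : ℝ, Htil r y = C * y ^ (2 * s) *
      ∫ t in b..(b + 1), ∫ θ in (0 : ℝ)..(2 * π),
        t * h t / (r ^ 2 + t ^ 2 + y ^ 2 - 2 * r * t * Real.cos θ) ^ (1 + s)) :
    ∀ r y : ℝ, 0 ≤ r → 0 < y → 0 ≤ H r y ∧ H r y ≤ Htil r y :=
  extension_comparison_general s hs0 N b hb C hC h hhcont hhnonneg H Htil hH hHtil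
end

section
/- Let 0 < s < 1/2 and let N be a positive integer. Then there exists a constant C = C(s,N) > 0 such that for every b ≥ 1, every measurable h : [b,b+1] → [0,∞), and every r ∈ [b,b+1], c_{2,s} ∫_0^{2π} ∫_b^{b+1} h(t)·(1 − sin(Nθ))·t / (r² + t² − 2rt·cos(θ − π/(2N)))^{1+s} dt dθ ≤ C · b^{−1−2s} · ( 2π ∫_b^{b+1} h(t)² t dt )^{1/2}. -/
/-!
Put `φ = θ - π / (2N)`, so that `1 - sin Nθ = 1 - cos Nφ`, and let `ψ = min |φ| |φ - 2π|`
(for `θ ∈ (0, 2π]` this is the distance from `φ` to `2πℤ`). The numerator is at most `N²ψ²/2`,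
while `rt ≥ b²` and `1 - cos φ ≥ 2ψ²/π²` bound the denominator below by
`((t - r)² + (4/π²) b²ψ²)^(1+s) ≥ |t - r|^s ((4/π²) b²ψ²)^(1+s/2)`. Hence the kernel is
`≲ b^(-2-s) ψ^(-s) |t - r|^(-s)`. Cauchy–Schwarz in `t` with the weight `t ≤ 2b` turns this into
`≲ b^(-3/2-s) ψ^(-s) ‖h‖`, and `b^(-3/2-s) ≤ b^(-1-2s)` because `s ≤ 1/2`. Finally
`|t - r|^(-2s)` and `ψ^(-s)` are integrable because `2s < 1`.
-/

open MeasureTheory Real Set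
open scoped ENNReal

theorem one_sub_cos_nat_mul_le (N : ℕ) (φ : ℝ) :
    1 - cos (N * φ) ≤ N ^ 2 / 2 * min |φ| |φ - 2 * π| ^ 2 := by
  have key : ∀ ψ, cos (N * ψ) = cos (N * φ) → 1 - cos (N * φ) ≤ N ^ 2 / 2 * |ψ| ^ 2 := by
    intro ψ hψ
    rw [← hψ, sq_abs]
    linarith [one_sub_sq_div_two_le_cos (x := N * ψ)]
  rcases min_choice |φ| |φ - 2 * π| with h | h <;> rw [h] <;> refine key _ ?_
  · rfl
  · rw [mul_sub, cos_sub_nat_mul_two_pi]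

theorem cos_le_one_sub_mul_min_sq {φ : ℝ} (h₁ : -π ≤ φ) (h₂ : φ ≤ 3 * π) :
    cos φ ≤ 1 - 2 / π ^ 2 * min |φ| |φ - 2 * π| ^ 2 := by
  have hle : min |φ| |φ - 2 * π| ≤ π := by
    rcases le_total φ π with h | h
    · exact min_le_of_left_le (abs_le.2 ⟨h₁, h⟩)
    · exact min_le_of_right_le (abs_le.2 ⟨by linarith, by linarith⟩)
  have hcos : cos (min |φ| |φ - 2 * π|) = cos φ := by
    rcases min_choice |φ| |φ - 2 * π| with h | h <;> rw [h]
    · exact cos_abs φ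
    · rw [cos_abs, cos_sub_two_pi]
  rw [← hcos]
  exact cos_le_one_sub_mul_cos_sq (by rwa [abs_of_nonneg (le_min (abs_nonneg _) (abs_nonneg _))])

theorem sin_nat_mul_eq_cos {N : ℕ} (hN : 0 < N) (θ : ℝ) :
    sin (N * θ) = cos (N * (θ - π / (2 * N))) := by
  have hN' : (N : ℝ) ≠ 0 := by positivity
  rw [mul_sub, show (N : ℝ) * (π / (2 * N)) = π / 2 by field_simp, cos_sub_pi_div_two]

theorem rpow_mul_rpow_le_add_rpow {x y α β : ℝ} (hx : 0 ≤ x) (hy : 0 ≤ y) (hα : 0 ≤ α)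
    (hβ : 0 ≤ β) : x ^ α * y ^ β ≤ (x + y) ^ (α + β) := by
  rw [rpow_add_of_nonneg (by positivity) hα hβ]
  gcongr <;> linarith

theorem sq_rpow_eq {x : ℝ} (hx : 0 ≤ x) (y : ℝ) : (x ^ 2) ^ y = x ^ (2 * y) := by
  rw [← rpow_natCast_mul hx, Nat.cast_ofNat]

theorem sqrt_mul_rpow_le {b s : ℝ} (hb : 1 ≤ b) (hs : s ≤ 1 / 2) :
    √b * b ^ (-2 - s) ≤ b ^ (-1 - 2 * s) := by
  rw [sqrt_eq_rpow, ← rpow_add (by linarith)]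
  exact rpow_le_rpow_of_exponent_le hb (by linarith)

theorem one_sub_cos_div_rpow_le (N : ℕ) {s b r t φ : ℝ} (hs : 0 ≤ s) (hb : 0 < b)
    (hbr : b ≤ r) (hbt : b ≤ t) (htr : t ≠ r) (h₁ : -π ≤ φ) (h₂ : φ ≤ 3 * π) :
    (1 - cos (N * φ)) / (r ^ 2 + t ^ 2 - 2 * r * t * cos φ) ^ (1 + s) ≤
      N ^ 2 / 2 * (π ^ 2 / 4) ^ (1 + s / 2) * b ^ (-2 - s) *
        min |φ| |φ - 2 * π| ^ (-s) * |t - r| ^ (-s) := by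
  have hnum := one_sub_cos_nat_mul_le N φ
  have hcos := cos_le_one_sub_mul_min_sq h₁ h₂
  set ψ := min |φ| |φ - 2 * π|
  have hψ : 0 ≤ ψ := le_min (abs_nonneg _) (abs_nonneg _)
  have hD : (t - r) ^ 2 + 4 / π ^ 2 * b ^ 2 * ψ ^ 2 ≤ r ^ 2 + t ^ 2 - 2 * r * t * cos φ := by
    have hrt : b ^ 2 ≤ r * t := by nlinarith
    linear_combination 2 * mul_le_mul hrt (le_sub_comm.1 hcos) (by positivity) (by nlinarith)
  rcases hψ.eq_or_lt with hψ0 | hψ0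
  · have : 1 - cos (N * φ) = 0 := by
      rw [← hψ0] at hnum
      linarith [cos_le_one (N * φ)]
    rw [this, zero_div]
    positivity
  have hts : 0 < |t - r| := abs_pos.2 (sub_ne_zero.2 htr)
  have hDs : |t - r| ^ s * ((4 / π ^ 2) ^ (1 + s / 2) * b ^ (2 + s) * ψ ^ (2 + s)) ≤
      (r ^ 2 + t ^ 2 - 2 * r * t * cos φ) ^ (1 + s) := by
    calc _ = ((t - r) ^ 2) ^ (s / 2) * (4 / π ^ 2 * b ^ 2 * ψ ^ 2) ^ (1 + s / 2) := by
          rw [← sq_abs (t - r), sq_rpow_eq (abs_nonneg _), mul_rpow (by positivity) (by positivity),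
            mul_rpow (by positivity) (by positivity), sq_rpow_eq hb.le, sq_rpow_eq hψ]
          ring_nf
      _ ≤ ((t - r) ^ 2 + 4 / π ^ 2 * b ^ 2 * ψ ^ 2) ^ (s / 2 + (1 + s / 2)) :=
          rpow_mul_rpow_le_add_rpow (by positivity) (by positivity) (by positivity)
            (by positivity)
      _ ≤ _ := by
          rw [show s / 2 + (1 + s / 2) = 1 + s by ring]
          gcongr
  calc _ ≤ N ^ 2 / 2 * ψ ^ 2 /
        (|t - r| ^ s * ((4 / π ^ 2) ^ (1 + s / 2) * b ^ (2 + s) * ψ ^ (2 + s))) := by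
        gcongr
    _ = _ := by
        rw [rpow_add hψ0, rpow_two, show -2 - s = -(2 + s) by ring, rpow_neg hb.le,
          rpow_neg hψ, rpow_neg hts.le, ← inv_div (π ^ 2), inv_rpow (by positivity)]
        field_simp

theorem lintegral_Ioo_zero_rpow_neg {p : ℝ} (hp : p < 1) {L : ℝ} (hL : 0 ≤ L) :
    ∫⁻ u in Ioo 0 L, ENNReal.ofReal (u ^ (-p)) = ENNReal.ofReal (L ^ (1 - p) / (1 - p)) := by
  have hint : IntegrableOn (fun u : ℝ ↦ u ^ (-p)) (Ioc 0 L) := by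
    simpa [uIoc_of_le hL] using
      (intervalIntegral.intervalIntegrable_rpow' (a := 0) (b := L) (by linarith)).1
  rw [← ofReal_integral_eq_lintegral_ofReal (hint.mono_set Ioo_subset_Ioc_self)
      ((ae_restrict_mem measurableSet_Ioo).mono fun u hu ↦ rpow_nonneg hu.1.le _),
    ← integral_Ioc_eq_integral_Ioo, ← intervalIntegral.integral_of_le hL,
    integral_rpow (Or.inl (by linarith)), zero_rpow (by linarith)]
  congr 1
  ring_nf

theorem lintegral_abs_sub_rpow_neg_le {p : ℝ} (hp : p < 1) {L x : ℝ} (hL : 0 ≤ L) {S : Set ℝ}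
    (hS : S ⊆ Icc (x - L) (x + L)) :
    ∫⁻ t in S, ENNReal.ofReal (|t - x| ^ (-p)) ≤ ENNReal.ofReal (2 * L ^ (1 - p) / (1 - p)) := by
  set F : ℝ → ℝ≥0∞ := fun u ↦ ENNReal.ofReal (|u| ^ (-p))
  have hF : Measurable F := by fun_prop
  have hsplit : Icc (x - L) (x + L) ≤ᵐ[volume]
      ((x - ·) ⁻¹' Ioo 0 L ∪ (· - x) ⁻¹' Ioo 0 L : Set ℝ) := by
    refine ae_le_set.2 (measure_mono_null (t := {x - L, x, x + L}) ?_ ((toFinite _).measure_zero _))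
    rintro t ⟨⟨h₁, h₂⟩, ht⟩
    simp only [mem_union, mem_preimage, mem_Ioo, not_or, not_and, not_lt] at ht
    simp only [mem_insert_iff, mem_singleton_iff]
    rcases lt_trichotomy t x with h | rfl | h
    · exact Or.inl (by linarith [ht.1 (by linarith)])
    · simp
    · exact Or.inr (Or.inr (by linarith [ht.2 (by linarith)]))
  have half : ∀ {g : ℝ → ℝ}, MeasurePreserving g → (∀ t, |g t| = |t - x|) →
      ∫⁻ t in g ⁻¹' Ioo 0 L, ENNReal.ofReal (|t - x| ^ (-p)) =
        ENNReal.ofReal (L ^ (1 - p) / (1 - p)) := by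
    intro g hg hgx
    simp_rw [← hgx]
    rw [hg.setLIntegral_comp_preimage measurableSet_Ioo hF, ← lintegral_Ioo_zero_rpow_neg hp hL]
    exact setLIntegral_congr_fun measurableSet_Ioo fun u hu ↦ by simp [F, abs_of_pos hu.1]
  calc ∫⁻ t in S, ENNReal.ofReal (|t - x| ^ (-p))
      ≤ ∫⁻ t in (x - ·) ⁻¹' Ioo 0 L ∪ (· - x) ⁻¹' Ioo 0 L, ENNReal.ofReal (|t - x| ^ (-p)) :=
        (lintegral_mono_set hS).trans (lintegral_mono_set' hsplit)
    _ ≤ _ := lintegral_union_le _ _ _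
    _ = _ := by
        rw [half (Measure.measurePreserving_sub_left volume x) fun t ↦ abs_sub_comm _ _,
          half (measurePreserving_sub_right volume x) fun t ↦ rfl, ← ENNReal.ofReal_add
          (by positivity) (by positivity), mul_div_assoc, two_mul]

theorem lintegral_ofReal_mul_le_of_le_mul {α : Type*} [MeasurableSpace α] {μ : Measure α}
    {f g k : α → ℝ} {M A : ℝ} (hM : 0 ≤ M) (hf : AEMeasurable f μ) (hg : AEMeasurable g μ)
    (hf0 : 0 ≤ᵐ[μ] f) (hk : ∀ᵐ a ∂μ, k a ≤ M * g a)
    (hA : ∫⁻ a, ENNReal.ofReal (g a ^ 2) ∂μ ≤ ENNReal.ofReal A) :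
    ∫⁻ a, ENNReal.ofReal (f a * k a) ∂μ ≤
      ENNReal.ofReal (M * √A) * (∫⁻ a, ENNReal.ofReal (f a ^ 2) ∂μ) ^ (1 / 2 : ℝ) := by
  have hsq : ∀ x : ℝ, ENNReal.ofReal x ^ (2 : ℝ) ≤ ENNReal.ofReal (x ^ 2) := fun x ↦ by
    rcases le_total 0 x with hx | hx
    · rw [ENNReal.rpow_two, ENNReal.ofReal_pow hx]
    · simp [ENNReal.ofReal_of_nonpos hx]
  have hsqrt : ENNReal.ofReal A ^ (1 / 2 : ℝ) = ENNReal.ofReal √A := by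
    rcases le_total 0 A with hA0 | hA0
    · rw [ENNReal.ofReal_rpow_of_nonneg hA0 (by norm_num), sqrt_eq_rpow]
    · simp [ENNReal.ofReal_of_nonpos hA0, sqrt_eq_zero'.2 hA0]
  calc ∫⁻ a, ENNReal.ofReal (f a * k a) ∂μ
      ≤ ∫⁻ a, ENNReal.ofReal M * (ENNReal.ofReal (f a) * ENNReal.ofReal (g a)) ∂μ := by
        refine lintegral_mono_ae ?_
        filter_upwards [hf0, hk] with a hfa hka
        rw [← ENNReal.ofReal_mul hfa, ← ENNReal.ofReal_mul hM]
        exact ENNReal.ofReal_le_ofReal (by linarith [mul_le_mul_of_nonneg_left hka hfa])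
    _ = ENNReal.ofReal M * ∫⁻ a, ENNReal.ofReal (f a) * ENNReal.ofReal (g a) ∂μ :=
        lintegral_const_mul' _ _ ENNReal.ofReal_ne_top
    _ ≤ ENNReal.ofReal M * ((∫⁻ a, ENNReal.ofReal (f a) ^ (2 : ℝ) ∂μ) ^ (1 / 2 : ℝ) *
          (∫⁻ a, ENNReal.ofReal (g a) ^ (2 : ℝ) ∂μ) ^ (1 / 2 : ℝ)) := by
        gcongr
        exact ENNReal.lintegral_mul_le_Lp_mul_Lq μ HolderConjugate.two_two
          hf.ennreal_ofReal hg.ennreal_ofReal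
    _ ≤ ENNReal.ofReal M * ((∫⁻ a, ENNReal.ofReal (f a ^ 2) ∂μ) ^ (1 / 2 : ℝ) *
          ENNReal.ofReal A ^ (1 / 2 : ℝ)) := by
        gcongr
        · exact hsq _
        · exact (lintegral_mono fun a ↦ hsq _).trans hA
    _ = _ := by
        rw [hsqrt, ENNReal.ofReal_mul hM]
        ring

theorem sqrt_mul_one_sub_cos_div_rpow_le (N : ℕ) {s b r t φ : ℝ} (hs0 : 0 ≤ s) (hs : s ≤ 1 / 2)
    (hb : 1 ≤ b) (hbr : b ≤ r) (ht : t ∈ Icc b (b + 1)) (htr : t ≠ r) (h₁ : -π ≤ φ)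
    (h₂ : φ ≤ 3 * π) :
    √t * ((1 - cos (N * φ)) / (r ^ 2 + t ^ 2 - 2 * r * t * cos φ) ^ (1 + s)) ≤
      √2 * (N ^ 2 / 2 * (π ^ 2 / 4) ^ (1 + s / 2)) * b ^ (-1 - 2 * s) *
        min |φ| |φ - 2 * π| ^ (-s) * |t - r| ^ (-s) := by
  calc _ ≤ √(2 * b) * (N ^ 2 / 2 * (π ^ 2 / 4) ^ (1 + s / 2) * b ^ (-2 - s) *
        min |φ| |φ - 2 * π| ^ (-s) * |t - r| ^ (-s)) :=
        mul_le_mul_of_nonneg (sqrt_le_sqrt (by linarith [ht.2]))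
          (one_sub_cos_div_rpow_le N hs0 (by linarith) hbr ht.1 htr h₁ h₂) (sqrt_nonneg _)
          (by positivity)
    _ = √2 * (N ^ 2 / 2 * (π ^ 2 / 4) ^ (1 + s / 2)) * (√b * b ^ (-2 - s)) *
        min |φ| |φ - 2 * π| ^ (-s) * |t - r| ^ (-s) := by
        rw [sqrt_mul zero_le_two]
        ring
    _ ≤ _ := by
        gcongr
        exact sqrt_mul_rpow_le hb hs

theorem exists_lintegral_angular_kernel_le {s : ℝ} (hs0 : 0 ≤ s) (hs : s < 1 / 2) {N : ℕ}
    (hN : 0 < N) :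
    ∃ K, 0 < K ∧ ∀ b, 1 ≤ b → ∀ r ∈ Icc b (b + 1), ∀ θ ∈ Ioc 0 (2 * π), ∀ h : ℝ → ℝ,
      Measurable h → (∀ t ∈ Icc b (b + 1), 0 ≤ h t) →
      ∫⁻ t in Icc b (b + 1), ENNReal.ofReal (h t * (1 - sin (N * θ)) * t /
          (r ^ 2 + t ^ 2 - 2 * r * t * cos (θ - π / (2 * N))) ^ (1 + s)) ≤
        ENNReal.ofReal (K * b ^ (-1 - 2 * s) *
            min |θ - π / (2 * N)| |θ - π / (2 * N) - 2 * π| ^ (-s)) *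
          (∫⁻ t in Icc b (b + 1), ENNReal.ofReal (h t ^ 2 * t)) ^ (1 / 2 : ℝ) := by
  set K₀ : ℝ := N ^ 2 / 2 * (π ^ 2 / 4) ^ (1 + s / 2)
  refine ⟨√2 * K₀ * √(2 / (1 - 2 * s)),
    mul_pos (by positivity) (sqrt_pos.2 (div_pos two_pos (by linarith))), ?_⟩
  intro b hb r hr θ hθ h hh hh0
  have hθ₀ : π / (2 * N) ≤ π := div_le_self pi_pos.le (by norm_cast; omega)
  have hθ₀' : 0 ≤ π / (2 * N) := by positivity
  rw [sin_nat_mul_eq_cos hN]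
  set φ := θ - π / (2 * N)
  set M := √2 * K₀ * b ^ (-1 - 2 * s) * min |φ| |φ - 2 * π| ^ (-s)
  have hk : ∀ᵐ t ∂volume.restrict (Icc b (b + 1)),
      √t * ((1 - cos (N * φ)) / (r ^ 2 + t ^ 2 - 2 * r * t * cos φ) ^ (1 + s)) ≤
        M * |t - r| ^ (-s) := by
    -- `t = r` must be excluded: there `|t - r| ^ (-s) = 0 ^ (-s) = 0`.
    filter_upwards [ae_restrict_mem measurableSet_Icc, Measure.ae_ne _ r] with t ht htr
    exact sqrt_mul_one_sub_cos_div_rpow_le N hs0 hs.le hb hr.1 ht htr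
      (by linarith [hθ.1]) (by linarith [hθ.2, pi_pos])
  have hA : ∫⁻ t in Icc b (b + 1), ENNReal.ofReal ((|t - r| ^ (-s)) ^ 2) ≤
      ENNReal.ofReal (2 / (1 - 2 * s)) := by
    simp_rw [← rpow_mul_natCast (abs_nonneg _), Nat.cast_ofNat, neg_mul, mul_comm s]
    simpa using lintegral_abs_sub_rpow_neg_le (p := 2 * s) (by linarith) zero_le_one
      (Icc_subset_Icc (by linarith [hr.2]) (by linarith [hr.1]))
  calc _ = ∫⁻ t in Icc b (b + 1), ENNReal.ofReal (h t * √t *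
        (√t * ((1 - cos (N * φ)) / (r ^ 2 + t ^ 2 - 2 * r * t * cos φ) ^ (1 + s)))) := by
        refine setLIntegral_congr_fun measurableSet_Icc fun t ht ↦ ?_
        congr 1
        linear_combination (-(h t * (1 - cos (N * φ)) /
          (r ^ 2 + t ^ 2 - 2 * r * t * cos φ) ^ (1 + s))) *
            mul_self_sqrt (by linarith [ht.1] : 0 ≤ t)
    _ ≤ ENNReal.ofReal (M * √(2 / (1 - 2 * s))) *
          (∫⁻ t in Icc b (b + 1), ENNReal.ofReal ((h t * √t) ^ 2)) ^ (1 / 2 : ℝ) :=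
        lintegral_ofReal_mul_le_of_le_mul (by positivity) (by fun_prop) (by fun_prop)
          ((ae_restrict_mem measurableSet_Icc).mono fun t ht ↦ by
            simpa using mul_nonneg (hh0 t ht) (sqrt_nonneg t)) hk hA
    _ = _ := by
        congr 2
        · ring
        · refine setLIntegral_congr_fun measurableSet_Icc fun t ht ↦ ?_
          rw [mul_pow, sq_sqrt (by linarith [ht.1])]

theorem lintegral_min_abs_rpow_neg_le {s θ₀ : ℝ} (hs : s < 1) (h₀ : 0 ≤ θ₀) (h₂π : θ₀ ≤ 2 * π) :
    ∫⁻ θ in Ioc 0 (2 * π), ENNReal.ofReal (min |θ - θ₀| |θ - θ₀ - 2 * π| ^ (-s)) ≤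
      ENNReal.ofReal (2 * (2 * (4 * π) ^ (1 - s) / (1 - s))) := by
  have hA : 0 ≤ 2 * (4 * π) ^ (1 - s) / (1 - s) :=
    div_nonneg (by positivity) (by linarith)
  have hsub : ∀ x ∈ Icc θ₀ (θ₀ + 2 * π), Ioc 0 (2 * π) ⊆ Icc (x - 4 * π) (x + 4 * π) :=
    fun x hx θ hθ ↦ ⟨by linarith [hθ.1, hx.2], by linarith [hθ.2, hx.1, pi_pos]⟩
  calc _ ≤ ∫⁻ θ in Ioc 0 (2 * π), ENNReal.ofReal (|θ - θ₀| ^ (-s)) +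
        ENNReal.ofReal (|θ - (θ₀ + 2 * π)| ^ (-s)) := by
        refine lintegral_mono fun θ ↦ ?_
        rw [← sub_sub]
        rcases min_choice |θ - θ₀| |θ - θ₀ - 2 * π| with h | h <;> rw [h]
        exacts [le_self_add, le_add_self]
    _ = _ := lintegral_add_left (by fun_prop) _
    _ ≤ _ := add_le_add
        (lintegral_abs_sub_rpow_neg_le hs (by positivity) (hsub _ ⟨le_rfl, by linarith [pi_pos]⟩))
        (lintegral_abs_sub_rpow_neg_le hs (by positivity) (hsub _ ⟨by linarith [pi_pos], le_rfl⟩))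
    _ = _ := by rw [← ENNReal.ofReal_add hA hA, ← two_mul]

/-- estimate for the angular error term `B[h]`: for `0 < s < 1/2` there is
`C = C(s,N) > 0` so that for all `b ≥ 1`, all nonnegative measurable profiles `h` on
`[b, b+1]`, and all `r ∈ [b, b+1]`,
`c_{2,s} ∫₀^{2π} ∫_b^{b+1} h(t)(1 − sin Nθ) t/(r²+t²−2rt cos(θ−π/2N))^{1+s} dt dθ
  ≤ C b^{−1−2s} ‖h‖_{L²(Ω_b)}`. -/
theorem angular_term_estimate (s : ℝ) (hs0 : 0 < s) (hs12 : s < 1 / 2)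
    (N : ℕ) (hN : 0 < N) (c : ℝ) (hc : 0 < c) :
    ∃ C : ℝ, 0 < C ∧ ∀ b : ℝ, 1 ≤ b → ∀ h : ℝ → ℝ, Measurable h →
      (∀ t ∈ Set.Icc b (b + 1), 0 ≤ h t) → ∀ r ∈ Set.Icc b (b + 1),
      ENNReal.ofReal c *
          ∫⁻ θ in Set.Ioc (0 : ℝ) (2 * π), ∫⁻ t in Set.Icc b (b + 1),
            ENNReal.ofReal (h t * (1 - Real.sin (N * θ)) * t /
              (r ^ 2 + t ^ 2 - 2 * r * t * Real.cos (θ - π / (2 * N))) ^ (1 + s))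
        ≤ ENNReal.ofReal (C * b ^ (-1 - 2 * s)) *
          (ENNReal.ofReal (2 * π) *
            ∫⁻ t in Set.Icc b (b + 1), ENNReal.ofReal ((h t) ^ 2 * t)) ^ ((1 : ℝ) / 2) := by
  obtain ⟨K, hK, hinner⟩ := exists_lintegral_angular_kernel_le hs0.le hs12 hN
  set θ₀ := π / (2 * N)
  have hθ₀ : θ₀ ≤ 2 * π :=
    (div_le_self pi_pos.le (by norm_cast; omega)).trans (by linarith [pi_pos])
  set A := 2 * (2 * (4 * π) ^ (1 - s) / (1 - s))
  have hA : 0 < A := mul_pos two_pos (div_pos (by positivity) (by linarith))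
  refine ⟨c * K * A, by positivity, fun b hb h hh hh0 r hr ↦ ?_⟩
  set T := ∫⁻ t in Icc b (b + 1), ENNReal.ofReal (h t ^ 2 * t)
  set w : ℝ → ℝ≥0∞ := fun θ ↦ ENNReal.ofReal (min |θ - θ₀| |θ - θ₀ - 2 * π| ^ (-s))
  calc _ ≤ ENNReal.ofReal c *
        ∫⁻ θ in Ioc 0 (2 * π), ENNReal.ofReal (K * b ^ (-1 - 2 * s)) * w θ * T ^ (1 / 2 : ℝ) := by
        gcongr ENNReal.ofReal c * ?_
        refine setLIntegral_mono' measurableSet_Ioc fun θ hθ ↦ ?_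
        rw [← ENNReal.ofReal_mul (by positivity)]
        exact hinner b hb r hr θ hθ h hh hh0
    _ = ENNReal.ofReal c * (ENNReal.ofReal (K * b ^ (-1 - 2 * s)) *
          (∫⁻ θ in Ioc 0 (2 * π), w θ) * T ^ (1 / 2 : ℝ)) := by
        rw [lintegral_mul_const _ (by fun_prop), lintegral_const_mul _ (by fun_prop)]
    _ ≤ ENNReal.ofReal c * (ENNReal.ofReal (K * b ^ (-1 - 2 * s)) * ENNReal.ofReal A *
          T ^ (1 / 2 : ℝ)) := by
        gcongr
        exact lintegral_min_abs_rpow_neg_le (by linarith) (by positivity) hθ₀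
    _ = ENNReal.ofReal (c * K * A * b ^ (-1 - 2 * s)) * T ^ (1 / 2 : ℝ) := by
        rw [← ENNReal.ofReal_mul (by positivity), ← mul_assoc, ← ENNReal.ofReal_mul hc.le]
        ring_nf
    _ ≤ _ := by
        rw [ENNReal.mul_rpow_of_nonneg _ _ (by norm_num)]
        gcongr
        refine le_mul_of_one_le_left' (ENNReal.one_le_rpow ?_ (by norm_num))
        exact ENNReal.one_le_ofReal.2 (by linarith [pi_gt_three])
end
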